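/- arXiv:2311.00673 — 10 statements merged into one kernel-verified Lean document; each statement's English description precedes it below -/
import Mathlib

section
/- Consider the discrete-time LTI system Σ and a candidate observer Σ̂ as in the definitions. If the matrices of Σ̂ satisfy D_UIO·C·E = E, B^u_UIO = (I − D_UIO·C)·B, and A_UIO·(I − D_UIO·C) + B^y_UIO·C = (I − D_UIO·C)·A, then for every trajectory (u, y, x, d) of Σ and every trajectory (u, y, x̂, z) of Σ̂ driven by the same input u and output y, the estimation error e(t) = x(t) − x̂(t) satisfies the autonomous dynamics e(t+1) = A_UIO·e(t) for all t ∈ ℤ₊; in particular e(t) = A_UIO^t · e(0) is independent of the disturbance d and of the input u. -/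
open Matrix Filter

noncomputable section

/-- A real square matrix is *Schur stable* if all of its complex eigenvalues
have modulus strictly less than `1`. -/
def SchurStable {n : ℕ} (M : Matrix (Fin n) (Fin n) ℝ) : Prop :=
  ∀ μ ∈ spectrum ℂ (M.map Complex.ofReal), ‖μ‖ < 1

/-- `(u, y, x, d)` is a trajectory of the system `Σ`:
`x(t+1) = A x(t) + B u(t) + E d(t)`, `y(t) = C x(t)`. -/
def IsSysTraj {n m p r : ℕ} (A : Matrix (Fin n) (Fin n) ℝ) (B : Matrix (Fin n) (Fin m) ℝ)
    (E : Matrix (Fin n) (Fin r) ℝ) (C : Matrix (Fin p) (Fin n) ℝ)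
    (u : ℕ → Fin m → ℝ) (y : ℕ → Fin p → ℝ) (x : ℕ → Fin n → ℝ) (d : ℕ → Fin r → ℝ) : Prop :=
  ∀ t : ℕ, x (t + 1) = A.mulVec (x t) + B.mulVec (u t) + E.mulVec (d t) ∧ y t = C.mulVec (x t)

/-- `(u, y, x̂, z)` is a trajectory of the candidate observer `Σ̂`:
`z(t+1) = A_UIO z(t) + B^u_UIO u(t) + B^y_UIO y(t)`, `x̂(t) = z(t) + D_UIO y(t)`. -/
def IsObsTraj {n m p : ℕ} (Auio : Matrix (Fin n) (Fin n) ℝ) (Bu : Matrix (Fin n) (Fin m) ℝ)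
    (By Duio : Matrix (Fin n) (Fin p) ℝ)
    (u : ℕ → Fin m → ℝ) (y : ℕ → Fin p → ℝ) (xhat : ℕ → Fin n → ℝ) (z : ℕ → Fin n → ℝ) : Prop :=
  ∀ t : ℕ, z (t + 1) = Auio.mulVec (z t) + Bu.mulVec (u t) + By.mulVec (y t) ∧
    xhat t = z t + Duio.mulVec (y t)

/-- `Σ̂` (given by `Auio, Bu, By, Duio`) is an unknown-input observer for `Σ`:
the estimation error `x - x̂` tends to `0` for every choice of initial conditions,
input signal, and unknown input. -/
def IsUIO {n m p r : ℕ} (A : Matrix (Fin n) (Fin n) ℝ) (B : Matrix (Fin n) (Fin m) ℝ)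
    (E : Matrix (Fin n) (Fin r) ℝ) (C : Matrix (Fin p) (Fin n) ℝ)
    (Auio : Matrix (Fin n) (Fin n) ℝ) (Bu : Matrix (Fin n) (Fin m) ℝ)
    (By Duio : Matrix (Fin n) (Fin p) ℝ) : Prop :=
  ∀ (u : ℕ → Fin m → ℝ) (y : ℕ → Fin p → ℝ) (x : ℕ → Fin n → ℝ) (d : ℕ → Fin r → ℝ)
    (xhat z : ℕ → Fin n → ℝ),
    IsSysTraj A B E C u y x d → IsObsTraj Auio Bu By Duio u y xhat z →
    Tendsto (fun t => x t - xhat t) atTop (nhds 0)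

/-- The set `T_Σ` of input/output/state trajectories of `Σ`. -/
def TSigma {n m p r : ℕ} (A : Matrix (Fin n) (Fin n) ℝ) (B : Matrix (Fin n) (Fin m) ℝ)
    (E : Matrix (Fin n) (Fin r) ℝ) (C : Matrix (Fin p) (Fin n) ℝ) :
    Set ((ℕ → Fin m → ℝ) × (ℕ → Fin p → ℝ) × (ℕ → Fin n → ℝ)) :=
  {w | ∃ d, IsSysTraj A B E C w.1 w.2.1 w.2.2 d}

/-- The set `T_Σ̂` of input/output/output-estimate trajectories of the observer `Σ̂`. -/
def TObs {n m p : ℕ} (Auio : Matrix (Fin n) (Fin n) ℝ) (Bu : Matrix (Fin n) (Fin m) ℝ)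
    (By Duio : Matrix (Fin n) (Fin p) ℝ) :
    Set ((ℕ → Fin m → ℝ) × (ℕ → Fin p → ℝ) × (ℕ → Fin n → ℝ)) :=
  {w | ∃ z, IsObsTraj Auio Bu By Duio w.1 w.2.1 w.2.2 z}

/-- "Past" data matrix: columns `v(0), …, v(N-1)`  (here `N = T - 1`). -/
def pastMat {k : ℕ} (N : ℕ) (v : ℕ → Fin k → ℝ) : Matrix (Fin k) (Fin N) ℝ :=
  Matrix.of fun i j => v j.val i

/-- "Future" data matrix: columns `v(1), …, v(N)`  (here `N = T - 1`). -/
def futMat {k : ℕ} (N : ℕ) (v : ℕ → Fin k → ℝ) : Matrix (Fin k) (Fin N) ℝ :=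
  Matrix.of fun i j => v (j.val + 1) i

/-- The historical data `(u_d, d_d, x_d, y_d)` on the time window `[0, N]`
(`N = T - 1`) are generated by the system `Σ`. -/
def GeneratedBy {n m p r : ℕ} (A : Matrix (Fin n) (Fin n) ℝ) (B : Matrix (Fin n) (Fin m) ℝ)
    (E : Matrix (Fin n) (Fin r) ℝ) (C : Matrix (Fin p) (Fin n) ℝ) (N : ℕ)
    (ud : ℕ → Fin m → ℝ) (dd : ℕ → Fin r → ℝ) (xd : ℕ → Fin n → ℝ) (yd : ℕ → Fin p → ℝ) :
    Prop :=
  (∀ t < N, xd (t + 1) = A.mulVec (xd t) + B.mulVec (ud t) + E.mulVec (dd t)) ∧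
  (∀ t ≤ N, yd t = C.mulVec (xd t))

/-- The triple `(A, E, C)` is *strong\* detectable*: for every trajectory of
`x(t+1) = A x(t) + E d(t)`, `y(t) = C x(t)` (zero known input),
`y(t) → 0` implies `x(t) → 0`. -/
def StrongStarDetectable {n p r : ℕ} (A : Matrix (Fin n) (Fin n) ℝ)
    (E : Matrix (Fin n) (Fin r) ℝ) (C : Matrix (Fin p) (Fin n) ℝ) : Prop :=
  ∀ (x : ℕ → Fin n → ℝ) (d : ℕ → Fin r → ℝ),
    (∀ t : ℕ, x (t + 1) = A.mulVec (x t) + E.mulVec (d t)) →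
    Tendsto (fun t => C.mulVec (x t)) atTop (nhds 0) →
    Tendsto x atTop (nhds 0)

/-- The set `T_c(u_d, y_d, x_d)` of trajectories compatible with the historical data:
for every `t`, the stacked vector `(u(t), y(t), x(t), x(t+1))` lies in the column
space of the stacked data matrix `[U_p; Y_p; X_p; X_f]`. -/
def TComp {n m p : ℕ} (N : ℕ) (Up : Matrix (Fin m) (Fin N) ℝ) (Yp : Matrix (Fin p) (Fin N) ℝ)
    (Xp Xf : Matrix (Fin n) (Fin N) ℝ) :
    Set ((ℕ → Fin m → ℝ) × (ℕ → Fin p → ℝ) × (ℕ → Fin n → ℝ)) :=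
  {w | ∀ t : ℕ, ∃ g : Fin N → ℝ, w.1 t = Up.mulVec g ∧ w.2.1 t = Yp.mulVec g ∧
    w.2.2 t = Xp.mulVec g ∧ w.2.2 (t + 1) = Xf.mulVec g}

/-- If the observer matrices satisfy `D_UIO C E = E`,
`B^u_UIO = (I - D_UIO C) B` and `A_UIO (I - D_UIO C) + B^y_UIO C = (I - D_UIO C) A`,
then for every trajectory of `Σ` and every observer trajectory driven by the same
input and output, the estimation error `e(t) = x(t) - x̂(t)` satisfies
`e(t+1) = A_UIO e(t)`; in particular `e(t) = A_UIO^t e(0)`, independently of `d` and `u`. -/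
theorem statement0 {n m p r : ℕ}
    (A : Matrix (Fin n) (Fin n) ℝ) (B : Matrix (Fin n) (Fin m) ℝ)
    (E : Matrix (Fin n) (Fin r) ℝ) (C : Matrix (Fin p) (Fin n) ℝ)
    (hE : E.rank = r)
    (Auio : Matrix (Fin n) (Fin n) ℝ) (Bu : Matrix (Fin n) (Fin m) ℝ)
    (By Duio : Matrix (Fin n) (Fin p) ℝ)
    (h2 : Duio * C * E = E)
    (h3 : Bu = (1 - Duio * C) * B)
    (h4 : Auio * (1 - Duio * C) + By * C = (1 - Duio * C) * A)
    (u : ℕ → Fin m → ℝ) (y : ℕ → Fin p → ℝ) (x : ℕ → Fin n → ℝ) (d : ℕ → Fin r → ℝ)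
    (xhat z : ℕ → Fin n → ℝ)
    (hsys : IsSysTraj A B E C u y x d)
    (hobs : IsObsTraj Auio Bu By Duio u y xhat z) :
    (∀ t : ℕ, x (t + 1) - xhat (t + 1) = Auio.mulVec (x t - xhat t)) ∧
    (∀ t : ℕ, x t - xhat t = (Auio ^ t).mulVec (x 0 - xhat 0)) := by
  have hE0 : ((1 : Matrix (Fin n) (Fin n) ℝ) - Duio * C) * E = 0 := by
    rw [Matrix.sub_mul, Matrix.one_mul, h2, sub_self]
  have key : ∀ t : ℕ, x (t + 1) - xhat (t + 1) = Auio.mulVec (x t - xhat t) := by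
    intro t
    have hx := (hsys t).1
    have hyt := (hsys t).2
    have hyt1 := (hsys (t + 1)).2
    have hz := (hobs t).1
    have hxh := (hobs t).2
    have hxh1 := (hobs (t + 1)).2
    have lhs_eq : x (t + 1) - xhat (t + 1)
        = (((1 : Matrix (Fin n) (Fin n) ℝ) - Duio * C) * A).mulVec (x t)
          - (By * C).mulVec (x t) - Auio.mulVec (z t) := by
      rw [hxh1, hyt1, hz, hyt, hx, h3]
      simp only [Matrix.mulVec_add, Matrix.mulVec_mulVec, Matrix.sub_mul, Matrix.one_mul,
        Matrix.sub_mulVec, Matrix.one_mulVec, ← Matrix.mul_assoc, h2]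
      abel
    have rhs_eq : Auio.mulVec (x t - xhat t)
        = (Auio * ((1 : Matrix (Fin n) (Fin n) ℝ) - Duio * C)).mulVec (x t)
          - Auio.mulVec (z t) := by
      rw [hxh, hyt]
      simp only [Matrix.mulVec_sub, Matrix.mulVec_add, Matrix.mulVec_mulVec, Matrix.sub_mul,
        Matrix.one_mul, Matrix.mul_sub, Matrix.mul_one, Matrix.sub_mulVec, Matrix.one_mulVec]
      abel
    rw [lhs_eq, rhs_eq]
    have h4' : (((1 : Matrix (Fin n) (Fin n) ℝ) - Duio * C) * A)
        = Auio * ((1 : Matrix (Fin n) (Fin n) ℝ) - Duio * C) + By * C := h4.symm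
    rw [h4', Matrix.add_mulVec]
    abel
  refine ⟨key, ?_⟩
  intro t
  induction t with
  | zero => simp
  | succ t ih => rw [key t, ih, Matrix.mulVec_mulVec, pow_succ']
end
end

section
/- There exists an unknown-input observer (UIO) Σ̂ of the form z(t+1) = A_UIO·z(t) + B^u_UIO·u(t) + B^y_UIO·y(t), x̂(t) = z(t) + D_UIO·y(t) for the system Σ if and only if there exist matrices A_UIO ∈ ℝ^{n×n}, B^u_UIO ∈ ℝ^{n×m}, B^y_UIO ∈ ℝ^{n×p}, D_UIO ∈ ℝ^{n×p} such that: A_UIO is Schur stable, D_UIO·C·E = E, B^u_UIO = (I − D_UIO·C)·B, and A_UIO·(I − D_UIO·C) + B^y_UIO·C = (I − D_UIO·C)·A. -/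
open Matrix Filter

noncomputable section

noncomputable section
def PowStable {n : ℕ} (M : Matrix (Fin n) (Fin n) ℝ) : Prop :=
  ∀ v : Fin n → ℝ, Tendsto (fun t => (M ^ t).mulVec v) atTop (nhds 0)

lemma mat_ext {k l : ℕ} {a b : Matrix (Fin k) (Fin l) ℝ} (h : ∀ v, a.mulVec v = b.mulVec v) :
    a = b := by
  have : Matrix.toLin' a = Matrix.toLin' b := LinearMap.ext fun v => by
    simpa [Matrix.toLin'_apply] using h v
  exact Matrix.toLin'.injective this

lemma toMatrix'_mulVec {k l : ℕ} (f : (Fin l → ℝ) →ₗ[ℝ] (Fin k → ℝ)) (v : Fin l → ℝ) :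
    (LinearMap.toMatrix' f).mulVec v = f v := by
  rw [← Matrix.toLin'_apply, Matrix.toLin'_toMatrix']

lemma exists_left_inverse {p r : ℕ} (M : Matrix (Fin p) (Fin r) ℝ) (h : M.rank = r) :
    ∃ G : Matrix (Fin r) (Fin p) ℝ, G * M = 1 := by
  have hker : LinearMap.ker M.mulVecLin = ⊥ := by
    have h1 := LinearMap.finrank_range_add_finrank_ker M.mulVecLin
    rw [Module.finrank_fin_fun] at h1
    have h2 : Module.finrank ℝ (LinearMap.range M.mulVecLin) = r := h
    rw [h2] at h1
    have h3 : Module.finrank ℝ (LinearMap.ker M.mulVecLin) = 0 := by omega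
    exact (Submodule.finrank_eq_zero).mp h3
  obtain ⟨g, hg⟩ := LinearMap.exists_leftInverse_of_injective M.mulVecLin hker
  refine ⟨LinearMap.toMatrix' g, ?_⟩
  apply mat_ext; intro v
  rw [← Matrix.mulVec_mulVec, toMatrix'_mulVec, Matrix.one_mulVec]
  have := LinearMap.congr_fun hg v
  simpa [Matrix.mulVecLin_apply] using this

lemma err_recurrence {n m p r : ℕ}
    (A : Matrix (Fin n) (Fin n) ℝ) (B : Matrix (Fin n) (Fin m) ℝ)
    (E : Matrix (Fin n) (Fin r) ℝ) (C : Matrix (Fin p) (Fin n) ℝ)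
    (Auio : Matrix (Fin n) (Fin n) ℝ) (Bu : Matrix (Fin n) (Fin m) ℝ)
    (By Duio : Matrix (Fin n) (Fin p) ℝ)
    (hD : Duio * C * E = E) (hBu : Bu = (1 - Duio * C) * B)
    (hA : Auio * (1 - Duio * C) + By * C = (1 - Duio * C) * A)
    (u : ℕ → Fin m → ℝ) (y : ℕ → Fin p → ℝ) (x : ℕ → Fin n → ℝ) (d : ℕ → Fin r → ℝ)
    (xhat z : ℕ → Fin n → ℝ)
    (hsys : IsSysTraj A B E C u y x d) (hobs : IsObsTraj Auio Bu By Duio u y xhat z) :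
    ∀ t, x (t + 1) - xhat (t + 1) = Auio.mulVec (x t - xhat t) := by
  set F := 1 - Duio * C with hF
  have hFE : F * E = 0 := by
    rw [hF, Matrix.sub_mul, Matrix.one_mul, hD, sub_self]
  have he : ∀ t, x t - xhat t = F.mulVec (x t) - z t := by
    intro t
    rw [(hobs t).2, (hsys t).2, hF, Matrix.sub_mulVec, Matrix.one_mulVec,
      ← Matrix.mulVec_mulVec]
    abel
  intro t
  have key : F * A = Auio * F + By * C := hA.symm
  rw [he (t+1), he t, (hsys t).1, (hobs t).1, (hsys t).2]
  simp only [Matrix.mulVec_add, Matrix.mulVec_sub, Matrix.mulVec_mulVec, key,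
    Matrix.add_mulVec, hFE, Matrix.zero_mulVec, hBu]
  abel

set_option maxHeartbeats 1000000 in
lemma FE_zero {n m p r : ℕ}
    (A : Matrix (Fin n) (Fin n) ℝ) (B : Matrix (Fin n) (Fin m) ℝ)
    (E : Matrix (Fin n) (Fin r) ℝ) (C : Matrix (Fin p) (Fin n) ℝ)
    (Auio : Matrix (Fin n) (Fin n) ℝ) (Bu : Matrix (Fin n) (Fin m) ℝ)
    (By Duio : Matrix (Fin n) (Fin p) ℝ)
    (h : IsUIO A B E C Auio Bu By Duio) : (1 - Duio * C) * E = 0 := by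
  set F := 1 - Duio * C with hF
  by_contra hne
  -- get v with (F*E) *ᵥ v ≠ 0
  have hv : ∃ v, (F * E).mulVec v ≠ 0 := by
    by_contra hv
    push_neg at hv
    exact hne (mat_ext fun v => by rw [hv v, Matrix.zero_mulVec])
  obtain ⟨v, hw⟩ := hv
  set w := (F * E).mulVec v with hwdef
  have hwpos : 0 < ‖w‖ := norm_pos_iff.mpr hw
  -- adversarial construction
  set qf : (Fin n → ℝ) × (Fin n → ℝ) → (Fin n → ℝ) := fun sp =>
    F.mulVec (A.mulVec sp.1) - Auio.mulVec sp.2 - By.mulVec (C.mulVec sp.1) with hqf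
  set α : (Fin n → ℝ) × (Fin n → ℝ) → ℝ := fun sp => (1 + ‖qf sp‖) / ‖w‖ with hα
  obtain ⟨st, hst0, hstS⟩ : ∃ st : ℕ → (Fin n → ℝ) × (Fin n → ℝ), st 0 = (0, 0) ∧
      ∀ t, st (t + 1) = (A.mulVec (st t).1 + E.mulVec (α (st t) • v),
        Auio.mulVec (st t).2 + By.mulVec (C.mulVec (st t).1)) :=
    ⟨fun t => Nat.rec ((0 : Fin n → ℝ), (0 : Fin n → ℝ))
      (fun _ prev => (A.mulVec prev.1 + E.mulVec (α prev • v),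
        Auio.mulVec prev.2 + By.mulVec (C.mulVec prev.1))) t, rfl, fun t => rfl⟩
  set x : ℕ → Fin n → ℝ := fun t => (st t).1 with hx
  set z : ℕ → Fin n → ℝ := fun t => (st t).2 with hz
  set d : ℕ → Fin r → ℝ := fun t => α (st t) • v with hd
  set u : ℕ → Fin m → ℝ := fun _ => 0 with hu
  set y : ℕ → Fin p → ℝ := fun t => C.mulVec (x t) with hy
  set xhat : ℕ → Fin n → ℝ := fun t => z t + Duio.mulVec (y t) with hxhat
  have hx1 : ∀ t, x (t + 1) = A.mulVec (x t) + E.mulVec (α (st t) • v) := fun t => by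
    rw [hx]; show (st (t+1)).1 = _; rw [hstS t]
  have hz1 : ∀ t, z (t + 1) = Auio.mulVec (z t) + By.mulVec (C.mulVec (x t)) := fun t => by
    rw [hz]; show (st (t+1)).2 = _; rw [hstS t]
  have hsys : IsSysTraj A B E C u y x d := by
    intro t
    refine ⟨?_, rfl⟩
    rw [hx1 t]
    show A.mulVec (x t) + E.mulVec (α (st t) • v)
        = A.mulVec (x t) + B.mulVec 0 + E.mulVec (α (st t) • v)
    rw [Matrix.mulVec_zero, add_zero]
  have hobs : IsObsTraj Auio Bu By Duio u y xhat z := by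
    intro t
    refine ⟨?_, rfl⟩
    rw [hz1 t]
    show Auio.mulVec (z t) + By.mulVec (C.mulVec (x t))
        = Auio.mulVec (z t) + Bu.mulVec 0 + By.mulVec (y t)
    rw [Matrix.mulVec_zero, add_zero, hy]
  have herr := h u y x d xhat z hsys hobs
  -- error lower bound
  have hlow : ∀ t, (1 : ℝ) ≤ ‖x (t + 1) - xhat (t + 1)‖ := by
    intro t
    have hrepr : x (t + 1) - xhat (t + 1) = qf (st t) + α (st t) • w := by
      have he : x (t + 1) - xhat (t + 1) = F.mulVec (x (t + 1)) - z (t + 1) := by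
        rw [hxhat]
        show x (t+1) - (z (t+1) + Duio.mulVec (y (t+1))) = F.mulVec (x (t+1)) - z (t+1)
        rw [hy]
        show x (t+1) - (z (t+1) + Duio.mulVec (C.mulVec (x (t+1))))
            = F.mulVec (x (t+1)) - z (t+1)
        rw [hF, Matrix.sub_mulVec, Matrix.one_mulVec, ← Matrix.mulVec_mulVec]
        abel
      rw [he, hx1 t, hz1 t]
      rw [Matrix.mulVec_add, Matrix.mulVec_smul, Matrix.mulVec_smul,
        show F.mulVec (E.mulVec v) = w from by rw [hwdef, ← Matrix.mulVec_mulVec]]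
      rw [hqf]
      dsimp only
      abel
    rw [hrepr]
    have hαw : ‖α (st t) • w‖ = 1 + ‖qf (st t)‖ := by
      rw [norm_smul, Real.norm_eq_abs, hα]
      have hα0 : (0:ℝ) ≤ (1 + ‖qf (st t)‖) / ‖w‖ := by positivity
      rw [abs_of_nonneg hα0, div_mul_cancel₀ _ (ne_of_gt hwpos)]
    have htri : ‖α (st t) • w‖ ≤ ‖qf (st t) + α (st t) • w‖ + ‖qf (st t)‖ := by
      have heq2 : α (st t) • w = (qf (st t) + α (st t) • w) - qf (st t) := by abel
      conv_lhs => rw [heq2]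
      exact norm_sub_le (qf (st t) + α (st t) • w) (qf (st t))
    rw [hαw] at htri
    linarith
  -- contradiction
  have hnorm := tendsto_zero_iff_norm_tendsto_zero.mp herr
  have hev := hnorm.eventually_lt_const (show (0:ℝ) < 1 by norm_num)
  obtain ⟨t, ht⟩ := (hev.and (eventually_ge_atTop 1)).exists
  obtain ⟨ht1, ht2⟩ := ht
  obtain ⟨t', rfl⟩ : ∃ t', t = t' + 1 := ⟨t - 1, by omega⟩
  exact absurd (hlow t') (not_le.mpr ht1)

attribute [local instance] Matrix.linftyOpNormedRing Matrix.linftyOpNormedAlgebra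

lemma map_ofReal_pow {n : ℕ} (M : Matrix (Fin n) (Fin n) ℝ) (t : ℕ) :
    (M.map Complex.ofReal) ^ t = (M ^ t).map Complex.ofReal := by
  have h1 : M.map Complex.ofReal = Complex.ofRealHom.mapMatrix M := rfl
  rw [h1, ← map_pow]
  rfl

lemma norm_ofReal_vec {n : ℕ} (w : Fin n → ℝ) : ‖(fun i => (w i : ℂ))‖ = ‖w‖ := by
  simp [Pi.norm_def, Pi.nnnorm_def]

lemma mulVec_map_ofReal {n : ℕ} (N : Matrix (Fin n) (Fin n) ℝ) (v : Fin n → ℝ) :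
    (N.map Complex.ofReal).mulVec (fun i => (v i : ℂ)) = fun i => ((N.mulVec v i : ℝ) : ℂ) := by
  funext i
  simp [Matrix.mulVec, dotProduct, Matrix.map_apply]

lemma powStable_of_schurStable {n : ℕ} (M : Matrix (Fin n) (Fin n) ℝ) (h : SchurStable M) :
    PowStable M := by
  classical
  set Mc := M.map Complex.ofReal with hMc
  haveI : CompleteSpace (Matrix (Fin n) (Fin n) ℂ) := FiniteDimensional.complete ℂ _
  -- spectral radius < 1
  have hρ : spectralRadius ℂ Mc < 1 := by
    rcases (spectrum ℂ Mc).eq_empty_or_nonempty with he | hne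
    · rw [spectralRadius]
      simp [he]
    · obtain ⟨μ0, hμ0, hmax⟩ := Set.exists_max_image (spectrum ℂ Mc) (fun μ => ‖μ‖₊)
        (Matrix.finite_spectrum Mc) hne
      have : spectralRadius ℂ Mc ≤ (‖μ0‖₊ : ENNReal) := by
        rw [spectralRadius]
        exact iSup₂_le fun μ hμ => by exact_mod_cast ENNReal.coe_le_coe.mpr (hmax μ hμ)
      refine lt_of_le_of_lt this ?_
      have h1 : ‖μ0‖₊ < 1 := by
        have := h μ0 hμ0
        simpa [← NNReal.coe_lt_coe] using this
      exact_mod_cast h1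
  -- Gelfand
  have hg := spectrum.pow_nnnorm_pow_one_div_tendsto_nhds_spectralRadius (Mc)
  obtain ⟨r, hr1, hr2⟩ := exists_between hρ
  have hrtop : r ≠ ⊤ := (hr2.trans_le le_top).ne
  have hev : ∀ᶠ t : ℕ in atTop, (‖Mc ^ t‖₊ : ENNReal) ^ (1 / (t:ℝ)) < r :=
    hg.eventually_lt_const hr1
  have hev2 : ∀ᶠ t : ℕ in atTop, ‖Mc ^ t‖ ≤ (r.toReal) ^ t := by
    filter_upwards [hev, eventually_ge_atTop 1] with t ht ht1
    have htne : (t : ℝ) ≠ 0 := by positivity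
    have key : (‖Mc ^ t‖₊ : ENNReal) ≤ r ^ (t : ℝ) := by
      calc (‖Mc ^ t‖₊ : ENNReal) = ((‖Mc ^ t‖₊ : ENNReal) ^ (1/(t:ℝ))) ^ (t:ℝ) := by
            rw [← ENNReal.rpow_mul, one_div, inv_mul_cancel₀ htne, ENNReal.rpow_one]
        _ ≤ r ^ (t:ℝ) := ENNReal.rpow_le_rpow ht.le (by positivity)
    have h2 : ((‖Mc ^ t‖₊ : ENNReal)).toReal ≤ (r ^ (t:ℝ)).toReal :=
      ENNReal.toReal_mono (ENNReal.rpow_ne_top_of_nonneg (by positivity) hrtop) key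
    rw [ENNReal.coe_toReal, coe_nnnorm] at h2
    rw [← ENNReal.toReal_rpow, Real.rpow_natCast] at h2
    exact h2
  have hnorm : Tendsto (fun t : ℕ => ‖Mc ^ t‖) atTop (nhds 0) := by
    apply squeeze_zero' (Filter.Eventually.of_forall fun t => norm_nonneg _) hev2
    have h1 : r.toReal < 1 := by
      have : r.toReal < (1 : ENNReal).toReal := ENNReal.toReal_strict_mono (by simp) hr2
      simpa using this
    exact tendsto_pow_atTop_nhds_zero_of_lt_one ENNReal.toReal_nonneg h1
  -- conclude
  intro v
  rw [tendsto_zero_iff_norm_tendsto_zero]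
  apply squeeze_zero (fun t => norm_nonneg _) (g := fun t => ‖Mc ^ t‖ * ‖v‖)
  · intro t
    have h1 : ‖(M ^ t).mulVec v‖ = ‖(Mc ^ t).mulVec (fun i => (v i : ℂ))‖ := by
      rw [hMc, map_ofReal_pow, mulVec_map_ofReal, norm_ofReal_vec]
    rw [h1]
    have h2 := Matrix.linfty_opNNNorm_mulVec (Mc ^ t) (fun i => (v i : ℂ))
    have h3 : ‖(fun i => (v i : ℂ))‖ = ‖v‖ := norm_ofReal_vec v
    calc ‖(Mc ^ t).mulVec (fun i => (v i : ℂ))‖ ≤ ‖Mc ^ t‖ * ‖(fun i => (v i : ℂ))‖ := h2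
      _ = ‖Mc ^ t‖ * ‖v‖ := by rw [h3]
  · simpa using hnorm.mul_const ‖v‖

lemma schurStable_of_powStable {n : ℕ} (M : Matrix (Fin n) (Fin n) ℝ) (h : PowStable M) :
    SchurStable M := by
  classical
  intro μ hμ
  set Mc := M.map Complex.ofReal with hMc
  rw [spectrum.mem_iff] at hμ
  rw [Matrix.isUnit_iff_isUnit_det, isUnit_iff_ne_zero, Ne, not_not] at hμ
  obtain ⟨w, hw0, hw⟩ := (Matrix.exists_mulVec_eq_zero_iff).mpr hμ
  -- eigenvector equation
  have heig : Mc.mulVec w = μ • w := by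
    have h1 : (algebraMap ℂ (Matrix (Fin n) (Fin n) ℂ)) μ = μ • (1 : Matrix (Fin n) (Fin n) ℂ) :=
      Algebra.algebraMap_eq_smul_one μ
    have h2 := hw
    rw [Matrix.sub_mulVec, h1, Matrix.smul_mulVec, Matrix.one_mulVec, sub_eq_zero] at h2
    exact h2.symm
  have heigt : ∀ t : ℕ, (Mc ^ t).mulVec w = (μ ^ t) • w := by
    intro t; induction t with
    | zero => simp
    | succ t ih =>
      rw [pow_succ', pow_succ', ← Matrix.mulVec_mulVec, ih, Matrix.mulVec_smul, heig, smul_smul]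
      rw [mul_comm]
  -- real and imaginary parts
  have hre : Tendsto (fun t => (M ^ t).mulVec (fun i => (w i).re)) atTop (nhds 0) := h _
  have him : Tendsto (fun t => (M ^ t).mulVec (fun i => (w i).im)) atTop (nhds 0) := h _
  obtain ⟨j, hj⟩ := Function.ne_iff.mp hw0
  have hcoord : Tendsto (fun t => ((M ^ t).mulVec (fun i => (w i).re)) j) atTop (nhds 0) := by
    simpa using tendsto_pi_nhds.mp hre j
  have hcoord2 : Tendsto (fun t => ((M ^ t).mulVec (fun i => (w i).im)) j) atTop (nhds 0) := by
    simpa using tendsto_pi_nhds.mp him j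
  -- complex coordinate tends to zero
  have hc : Tendsto (fun t => (μ ^ t) * w j) atTop (nhds 0) := by
    have hrepr : ∀ t : ℕ, (μ ^ t) * w j =
        Complex.ofReal (((M ^ t).mulVec (fun i => (w i).re)) j)
          + Complex.I * Complex.ofReal (((M ^ t).mulVec (fun i => (w i).im)) j) := by
      intro t
      have h1 : ((Mc ^ t).mulVec w) j = (μ ^ t) • w j := by rw [heigt]; rfl
      have h2 : ((Mc ^ t).mulVec w) j =
          Complex.ofReal (((M ^ t).mulVec (fun i => (w i).re)) j)
            + Complex.I * Complex.ofReal (((M ^ t).mulVec (fun i => (w i).im)) j) := by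
        rw [hMc, map_ofReal_pow]
        simp only [Matrix.mulVec, dotProduct, Matrix.map_apply]
        push_cast
        rw [Finset.mul_sum, ← Finset.sum_add_distrib]
        congr 1; funext i
        conv_lhs => rw [← Complex.re_add_im (w i)]
        ring
      rw [← h2, h1]; rfl
    rw [show (fun t => (μ ^ t) * w j) = _ from funext hrepr]
    have := (hcoord.ofReal).add ((hcoord2.ofReal).const_mul Complex.I)
    simpa using this
  -- conclude |μ| < 1
  by_contra hge
  push_neg at hge
  have hwj : w j ≠ 0 := by simpa using hj
  have hlow : ∀ t : ℕ, ‖w j‖ ≤ ‖(μ ^ t) * w j‖ := by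
    intro t
    rw [norm_mul, norm_pow]
    nlinarith [norm_nonneg (w j), one_le_pow₀ hge (n := t), norm_pos_iff.mpr hwj]
  have hev : ∀ᶠ t : ℕ in atTop, ‖(μ ^ t) * w j‖ < ‖w j‖ := by
    have h0 : Tendsto (fun t => ‖(μ ^ t) * w j‖) atTop (nhds 0) := by simpa using hc.norm
    exact h0.eventually_lt_const (norm_pos_iff.mpr hwj)
  obtain ⟨t, ht⟩ := hev.exists
  exact absurd (hlow t) (not_le.mpr ht)

lemma detStab : ∀ (n : ℕ), ∀ (p : ℕ) (G : Matrix (Fin n) (Fin n) ℝ)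
    (C : Matrix (Fin p) (Fin n) ℝ),
    (∀ x : ℕ → Fin n → ℝ, (∀ t, x (t+1) = G.mulVec (x t)) → (∀ t, C.mulVec (x t) = 0) →
      Tendsto x atTop (nhds 0)) →
    ∃ L : Matrix (Fin n) (Fin p) ℝ, PowStable (G - L * C) := by
  intro n
  induction n using Nat.strong_induction_on with
  | _ n IH =>
  intro p G C hdet
  by_cases hK : LinearMap.ker C.mulVecLin = ⊤
  · refine ⟨0, ?_⟩
    have hG : PowStable G := by
      intro v
      refine hdet (fun t => (G ^ t).mulVec v) (fun t => ?_) (fun t => ?_)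
      · show (G ^ (t+1)).mulVec v = G.mulVec ((G ^ t).mulVec v)
        rw [pow_succ', Matrix.mulVec_mulVec]
      · have : ((G ^ t).mulVec v) ∈ LinearMap.ker C.mulVecLin := by rw [hK]; trivial
        simpa [Matrix.mulVecLin_apply] using this
    simpa [zero_mul, sub_zero] using hG
  · set K := LinearMap.ker C.mulVecLin with hKdef
    obtain ⟨W, hW⟩ := Submodule.exists_isCompl K
    set q := Module.finrank ℝ K with hq
    set s := Module.finrank ℝ W with hs
    have hqn : q < n := by
      have := Submodule.finrank_lt (K := ℝ) hK
      simpa [Module.finrank_fin_fun] using this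
    let bK : Module.Basis (Fin q) ℝ K := Module.finBasis ℝ K
    let bW : Module.Basis (Fin s) ℝ W := Module.finBasis ℝ W
    let vmap : (Fin q → ℝ) →ₗ[ℝ] (Fin n → ℝ) := K.subtype ∘ₗ bK.equivFun.symm.toLinearMap
    let v'map : (Fin n → ℝ) →ₗ[ℝ] (Fin q → ℝ) :=
      bK.equivFun.toLinearMap ∘ₗ K.projectionOnto W hW
    let umap : (Fin s → ℝ) →ₗ[ℝ] (Fin n → ℝ) := W.subtype ∘ₗ bW.equivFun.symm.toLinearMap
    let u'map : (Fin n → ℝ) →ₗ[ℝ] (Fin s → ℝ) :=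
      bW.equivFun.toLinearMap ∘ₗ W.projectionOnto K hW.symm
    let V := LinearMap.toMatrix' vmap
    let V' := LinearMap.toMatrix' v'map
    let U := LinearMap.toMatrix' umap
    let U' := LinearMap.toMatrix' u'map
    have hVap : ∀ y, V.mulVec y = vmap y := toMatrix'_mulVec vmap
    have hV'ap : ∀ y, V'.mulVec y = v'map y := toMatrix'_mulVec v'map
    have hUap : ∀ y, U.mulVec y = umap y := toMatrix'_mulVec umap
    have hU'ap : ∀ y, U'.mulVec y = u'map y := toMatrix'_mulVec u'map
    -- key matrix facts
    have hV'V : V' * V = 1 := by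
      apply mat_ext; intro y
      rw [← Matrix.mulVec_mulVec, hVap, hV'ap, Matrix.one_mulVec]
      show bK.equivFun ((K.projectionOnto W hW) ((bK.equivFun.symm y : K) : Fin n → ℝ)) = y
      rw [Submodule.projectionOnto_apply_left hW, LinearEquiv.apply_symm_apply]
    have hdecomp : V * V' + U * U' = 1 := by
      apply mat_ext; intro x
      rw [Matrix.add_mulVec, ← Matrix.mulVec_mulVec, ← Matrix.mulVec_mulVec,
        hV'ap, hU'ap, hVap, hUap, Matrix.one_mulVec]
      show ((bK.equivFun.symm (bK.equivFun ((K.projectionOnto W hW) x)) : K) : Fin n → ℝ)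
          + ((bW.equivFun.symm (bW.equivFun ((W.projectionOnto K hW.symm) x)) : W) : Fin n → ℝ) = x
      rw [LinearEquiv.symm_apply_apply, LinearEquiv.symm_apply_apply]
      exact Submodule.projection_add_projection_eq_self hW x
    have hCV : C * V = 0 := by
      apply mat_ext; intro y
      rw [← Matrix.mulVec_mulVec, hVap, Matrix.zero_mulVec]
      have hmem : vmap y ∈ K := (bK.equivFun.symm y : K).2
      simpa [hKdef, Matrix.mulVecLin_apply] using hmem
    -- reduced pair
    set G11 := V' * (G * V) with hG11
    set G21 := U' * (G * V) with hG21
    have hGV : G * V = V * G11 + U * G21 := by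
      calc G * V = (1 : Matrix (Fin n) (Fin n) ℝ) * (G * V) := by rw [Matrix.one_mul]
        _ = (V * V' + U * U') * (G * V) := by rw [hdecomp]
        _ = V * G11 + U * G21 := by rw [Matrix.add_mul, Matrix.mul_assoc, Matrix.mul_assoc]
    obtain ⟨Z, hZ⟩ := IH q hqn s G11 G21 (by
      intro x' hdyn hout
      set x : ℕ → Fin n → ℝ := fun t => V.mulVec (x' t) with hx
      have hdyn' : ∀ t, x (t+1) = G.mulVec (x t) := by
        intro t
        rw [hx]
        show V.mulVec (x' (t+1)) = G.mulVec (V.mulVec (x' t))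
        rw [hdyn t, Matrix.mulVec_mulVec, Matrix.mulVec_mulVec, hGV, Matrix.add_mulVec]
        rw [show (U * G21).mulVec (x' t) = U.mulVec (G21.mulVec (x' t)) from
          (Matrix.mulVec_mulVec (x' t) U G21).symm]
        rw [hout t, Matrix.mulVec_zero, add_zero]
      have hout' : ∀ t, C.mulVec (x t) = 0 := by
        intro t
        rw [hx]
        show C.mulVec (V.mulVec (x' t)) = 0
        rw [Matrix.mulVec_mulVec, hCV, Matrix.zero_mulVec]
      have hx0 := hdet x hdyn' hout'
      have hrec : x' = fun t => V'.mulVec (x t) := by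
        funext t
        rw [hx]
        show x' t = V'.mulVec (V.mulVec (x' t))
        rw [Matrix.mulVec_mulVec, hV'V, Matrix.one_mulVec]
      rw [hrec]
      have hcont : Continuous fun w : Fin n → ℝ => V'.mulVec w := by
        have : (fun w : Fin n → ℝ => V'.mulVec w) = ⇑(V'.mulVecLin) := by
          funext w; rw [Matrix.mulVecLin_apply]
        rw [this]
        exact V'.mulVecLin.continuous_of_finiteDimensional
      have := (hcont.tendsto 0).comp hx0
      simpa [Matrix.mulVec_zero, Function.comp_def] using this)
    set Q := V' - Z * U' with hQ
    set P := V * Q with hP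
    set X := Q * (G * V) with hX
    have hXval : X = G11 - Z * G21 := by
      rw [hX, hQ, Matrix.sub_mul, hG11, hG21, Matrix.mul_assoc]
    have hXpow : PowStable X := by rw [hXval]; exact hZ
    -- factor 1 - P through C
    have hker : ∀ x : Fin n → ℝ, C.mulVec x = 0 → (1 - P).mulVec x = 0 := by
      intro x hx
      have hmem : x ∈ K := by simpa [hKdef, Matrix.mulVecLin_apply] using hx
      have hU'x : U'.mulVec x = 0 := by
        rw [hU'ap]
        show bW.equivFun ((W.projectionOnto K hW.symm) x) = 0
        rw [Submodule.projectionOnto_apply_of_mem_right hW.symm hmem, map_zero]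
      have hVV'x : V.mulVec (V'.mulVec x) = x := by
        rw [hV'ap, hVap]
        show ((bK.equivFun.symm (bK.equivFun ((K.projectionOnto W hW) x)) : K) : Fin n → ℝ) = x
        rw [LinearEquiv.symm_apply_apply]
        have : (K.projectionOnto W hW) x = ⟨x, hmem⟩ := by
          have := Submodule.projectionOnto_apply_left hW (⟨x, hmem⟩ : K)
          simpa using this
        rw [this]
      have hPx : P.mulVec x = x := by
        rw [hP, ← Matrix.mulVec_mulVec, hQ, Matrix.sub_mulVec, ← Matrix.mulVec_mulVec, hU'x,
          Matrix.mulVec_zero, sub_zero, hVV'x]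
      rw [Matrix.sub_mulVec, Matrix.one_mulVec, hPx, sub_self]
    -- build Θ
    have hle : LinearMap.ker C.mulVecLin ≤ LinearMap.ker (1 - P).mulVecLin := by
      intro x hx
      rw [LinearMap.mem_ker, Matrix.mulVecLin_apply]
      exact hker x (by simpa [Matrix.mulVecLin_apply] using hx)
    obtain ⟨R', hR'⟩ := Submodule.exists_isCompl (LinearMap.range C.mulVecLin)
    set θ : (Fin p → ℝ) →ₗ[ℝ] (Fin n → ℝ) :=
      ((LinearMap.ker C.mulVecLin).liftQ (1 - P).mulVecLin hle) ∘ₗ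
        (C.mulVecLin.quotKerEquivRange.symm.toLinearMap) ∘ₗ
        ((LinearMap.range C.mulVecLin).projectionOnto R' hR') with hθ
    have hθap : ∀ x, θ (C.mulVec x) = (1 - P).mulVec x := by
      intro x
      have hmem : C.mulVec x ∈ LinearMap.range C.mulVecLin :=
        ⟨x, by rw [Matrix.mulVecLin_apply]⟩
      have h1 : ((LinearMap.range C.mulVecLin).projectionOnto R' hR') (C.mulVec x)
          = ⟨C.mulVec x, hmem⟩ := by
        have := Submodule.projectionOnto_apply_left hR' (⟨C.mulVec x, hmem⟩ :
          LinearMap.range C.mulVecLin)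
        simpa using this
      have h2 : C.mulVecLin.quotKerEquivRange.symm ⟨C.mulVec x, hmem⟩
          = Submodule.Quotient.mk x := by
        rw [LinearEquiv.symm_apply_eq]
        ext
        rw [LinearMap.quotKerEquivRange_apply_mk, Matrix.mulVecLin_apply]
      rw [hθ]
      simp only [LinearMap.comp_apply, LinearEquiv.coe_toLinearMap]
      rw [h1, h2, Submodule.liftQ_apply, Matrix.mulVecLin_apply]
    set Θ := LinearMap.toMatrix' θ with hΘ
    have hΘC : Θ * C = 1 - P := by
      apply mat_ext; intro x
      rw [← Matrix.mulVec_mulVec, hΘ, toMatrix'_mulVec, hθap]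
    refine ⟨G * Θ, ?_⟩
    have hGLC : G - G * Θ * C = G * P := by
      rw [Matrix.mul_assoc, hΘC, Matrix.mul_sub, Matrix.mul_one, sub_sub_cancel]
    rw [hGLC]
    -- power identity and conclusion
    have hpow : ∀ t, (G * P) ^ (t+1) = G * (V * (X ^ t * Q)) := by
      intro t
      induction t with
      | zero => rw [pow_zero, pow_one, Matrix.one_mul, hP]
      | succ t ih =>
        rw [pow_succ', ih, pow_succ', hP, hX]
        simp only [Matrix.mul_assoc]
    intro v
    have h1 : Tendsto (fun t => (G * (V * (X ^ t * Q))).mulVec v) atTop (nhds 0) := by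
      have heq : ∀ t, (G * (V * (X ^ t * Q))).mulVec v
          = (G * V).mulVec ((X ^ t).mulVec (Q.mulVec v)) := by
        intro t
        rw [Matrix.mulVec_mulVec, Matrix.mulVec_mulVec]
        congr 1
        simp only [Matrix.mul_assoc]
      have hcont : Continuous fun w : Fin q → ℝ => (G * V).mulVec w := by
        have : (fun w : Fin q → ℝ => (G * V).mulVec w) = ⇑((G * V).mulVecLin) := by
          funext w; rw [Matrix.mulVecLin_apply]
        rw [this]
        exact (G * V).mulVecLin.continuous_of_finiteDimensional
      have hcomp := (hcont.tendsto 0).comp (hXpow (Q.mulVec v))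
      rw [Matrix.mulVec_zero] at hcomp
      exact hcomp.congr fun t => (heq t).symm
    have h2 : Tendsto (fun t => ((G * P) ^ (t+1)).mulVec v) atTop (nhds 0) := by
      simp only [hpow]; exact h1
    exact (tendsto_add_atTop_iff_nat 1).mp h2

/-- A UIO of the prescribed form exists for `Σ` if and only if
there exist matrices `A_UIO, B^u_UIO, B^y_UIO, D_UIO` with `A_UIO` Schur stable,
`D_UIO C E = E`, `B^u_UIO = (I - D_UIO C) B`, and
`A_UIO (I - D_UIO C) + B^y_UIO C = (I - D_UIO C) A`. -/
theorem statement1 {n m p r : ℕ}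
    (A : Matrix (Fin n) (Fin n) ℝ) (B : Matrix (Fin n) (Fin m) ℝ)
    (E : Matrix (Fin n) (Fin r) ℝ) (C : Matrix (Fin p) (Fin n) ℝ)
    (hE : E.rank = r) :
    (∃ (Auio : Matrix (Fin n) (Fin n) ℝ) (Bu : Matrix (Fin n) (Fin m) ℝ)
      (By Duio : Matrix (Fin n) (Fin p) ℝ), IsUIO A B E C Auio Bu By Duio) ↔
    (∃ (Auio : Matrix (Fin n) (Fin n) ℝ) (Bu : Matrix (Fin n) (Fin m) ℝ)
      (By Duio : Matrix (Fin n) (Fin p) ℝ),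
      SchurStable Auio ∧ Duio * C * E = E ∧ Bu = (1 - Duio * C) * B ∧
      Auio * (1 - Duio * C) + By * C = (1 - Duio * C) * A) := by

  constructor
  · rintro ⟨Auio, Bu, By, Duio, h⟩
    -- necessity
    have hFE : (1 - Duio * C) * E = 0 := FE_zero A B E C Auio Bu By Duio h
    have hDCE : Duio * C * E = E := by
      have h1 : (1 : Matrix (Fin n) (Fin n) ℝ) * E - Duio * C * E = 0 := by
        rw [← Matrix.sub_mul, hFE]
      rw [Matrix.one_mul, sub_eq_zero] at h1
      exact h1.symm
    have hrank : (C * E).rank = r := by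
      refine le_antisymm (le_trans (Matrix.rank_mul_le_right C E) (le_of_eq hE)) ?_
      have h2 : E = Duio * (C * E) := by rw [← Matrix.mul_assoc, hDCE]
      calc r = E.rank := hE.symm
        _ = (Duio * (C * E)).rank := by rw [← h2]
        _ ≤ (C * E).rank := Matrix.rank_mul_le_right _ _
    obtain ⟨G', hG'⟩ := exists_left_inverse (C * E) hrank
    set D' := E * G' with hD'
    have hD'CE : D' * C * E = E := by
      rw [hD', Matrix.mul_assoc, Matrix.mul_assoc, hG', Matrix.mul_one]
    set Abar := (1 - D' * C) * A with hAbar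
    -- detectability hypothesis for (Abar, C)
    have hdet : ∀ x : ℕ → Fin n → ℝ, (∀ t, x (t+1) = Abar.mulVec (x t)) →
        (∀ t, C.mulVec (x t) = 0) → Tendsto x atTop (nhds 0) := by
      intro x hdyn hout
      set d : ℕ → Fin r → ℝ := fun t => -((G' * (C * A)).mulVec (x t)) with hd
      set u : ℕ → Fin m → ℝ := fun _ => 0 with hu
      set y : ℕ → Fin p → ℝ := fun t => C.mulVec (x t) with hy
      have hsys : IsSysTraj A B E C u y x d := by
        intro t
        refine ⟨?_, rfl⟩
        rw [hdyn t]
        show Abar.mulVec (x t) = A.mulVec (x t) + B.mulVec 0 + E.mulVec (d t)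
        rw [Matrix.mulVec_zero, add_zero, hAbar, Matrix.sub_mul, Matrix.one_mul,
          Matrix.sub_mulVec]
        rw [show d t = -((G' * (C * A)).mulVec (x t)) from rfl, Matrix.mulVec_neg,
          Matrix.mulVec_mulVec]
        rw [show E * (G' * (C * A)) = D' * C * A from by
          rw [hD', Matrix.mul_assoc, Matrix.mul_assoc]]
        abel
      have hobs : IsObsTraj Auio Bu By Duio u y (fun _ => 0) (fun _ => 0) := by
        intro t
        constructor
        · show (0 : Fin n → ℝ) = Auio.mulVec 0 + Bu.mulVec 0 + By.mulVec (y t)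
          rw [show y t = 0 from hout t, Matrix.mulVec_zero, Matrix.mulVec_zero,
            Matrix.mulVec_zero, add_zero, add_zero]
        · show (0 : Fin n → ℝ) = 0 + Duio.mulVec (y t)
          rw [show y t = 0 from hout t, Matrix.mulVec_zero, add_zero]
      have := h u y x d (fun _ => 0) (fun _ => 0) hsys hobs
      simpa using this
    obtain ⟨L, hL⟩ := detStab n p Abar C hdet
    refine ⟨Abar - L * C, (1 - D' * C) * B, L + (Abar - L * C) * D', D',
      schurStable_of_powStable _ hL, hD'CE, rfl, ?_⟩
    rw [← hAbar]
    simp only [Matrix.mul_sub, Matrix.sub_mul, Matrix.add_mul, Matrix.mul_one, Matrix.mul_assoc]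
    abel
  · rintro ⟨Auio, Bu, By, Duio, hS, hD, hBu, hA⟩
    refine ⟨Auio, Bu, By, Duio, ?_⟩
    intro u y x d xhat z hsys hobs
    have hrec := err_recurrence A B E C Auio Bu By Duio hD hBu hA u y x d xhat z hsys hobs
    have hiter : ∀ t, x t - xhat t = (Auio ^ t).mulVec (x 0 - xhat 0) := by
      intro t
      induction t with
      | zero => rw [pow_zero, Matrix.one_mulVec]
      | succ t ih => rw [hrec t, ih, Matrix.mulVec_mulVec, ← pow_succ']
    exact (powStable_of_schurStable Auio hS (x 0 - xhat 0)).congr fun t => (hiter t).symm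
end
end
end

section
/- The condition rank(C·E) = rank(E) = r holds if and only if there exist matrices A_UIO ∈ ℝ^{n×n}, B^u_UIO ∈ ℝ^{n×m}, B^y_UIO ∈ ℝ^{n×p}, D_UIO ∈ ℝ^{n×p} (with no stability requirement on A_UIO) satisfying D_UIO·C·E = E, B^u_UIO = (I − D_UIO·C)·B, and A_UIO·(I − D_UIO·C) + B^y_UIO·C = (I − D_UIO·C)·A. -/
open Matrix Filter

noncomputable section

/-- A square real matrix of full rank is a unit. -/
lemma isUnit_of_rank_eq_card {k : ℕ} (M : Matrix (Fin k) (Fin k) ℝ)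
    (h : M.rank = k) : IsUnit M := by
  have hsurj : Function.Surjective M.mulVecLin := by
    rw [← LinearMap.range_eq_top]
    apply Submodule.eq_top_of_finrank_eq
    rw [← Matrix.rank, h, Module.finrank_pi]
    simp
  have hbij : Function.Bijective M.mulVecLin :=
    ⟨(LinearMap.injective_iff_surjective).2 hsurj, hsurj⟩
  have hunit : IsUnit (Matrix.toLinAlgEquiv' M) := by
    rw [Module.End.isUnit_iff]
    exact hbij
  have := hunit.map (Matrix.toLinAlgEquiv' (R := ℝ) (n := Fin k)).symm
  simpa using this

/-- `rank(CE) = rank(E) = r` holds if and only if there exist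
matrices `A_UIO, B^u_UIO, B^y_UIO, D_UIO` (no stability requirement). -/
theorem statement4 {n m p r : ℕ}
    (A : Matrix (Fin n) (Fin n) ℝ) (B : Matrix (Fin n) (Fin m) ℝ)
    (E : Matrix (Fin n) (Fin r) ℝ) (C : Matrix (Fin p) (Fin n) ℝ)
    (hE : E.rank = r) :
    ((C * E).rank = r ∧ E.rank = r) ↔
    (∃ (Auio : Matrix (Fin n) (Fin n) ℝ) (Bu : Matrix (Fin n) (Fin m) ℝ)
      (By Duio : Matrix (Fin n) (Fin p) ℝ),
      Duio * C * E = E ∧ Bu = (1 - Duio * C) * B ∧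
      Auio * (1 - Duio * C) + By * C = (1 - Duio * C) * A) := by
  constructor
  · rintro ⟨hCE, -⟩
    -- (CE)ᵀ(CE) is invertible
    have hG : ((C * E)ᵀ * (C * E)).rank = r := by
      rw [Matrix.rank_transpose_mul_self]; exact hCE
    have hU : IsUnit ((C * E)ᵀ * (C * E)) := isUnit_of_rank_eq_card _ hG
    obtain ⟨G, hG1⟩ := hU.exists_left_inv
    set Duio : Matrix (Fin n) (Fin p) ℝ := E * G * (C * E)ᵀ with hD
    have hDCE : Duio * C * E = E := by
      have : Duio * C * E = E * (G * ((C * E)ᵀ * (C * E))) := by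
        rw [hD]; simp only [Matrix.mul_assoc]
      rw [this, hG1, Matrix.mul_one]
    refine ⟨(1 - Duio * C) * A, (1 - Duio * C) * B, (1 - Duio * C) * A * Duio, Duio,
      hDCE, rfl, ?_⟩
    calc (1 - Duio * C) * A * (1 - Duio * C) + (1 - Duio * C) * A * Duio * C
        = (1 - Duio * C) * A * ((1 - Duio * C) + Duio * C) := by
          simp only [Matrix.mul_assoc, Matrix.mul_add]
      _ = (1 - Duio * C) * A := by rw [sub_add_cancel, Matrix.mul_one]
  · rintro ⟨Auio, Bu, By, Duio, hDCE, -, -⟩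
    refine ⟨le_antisymm ?_ ?_, hE⟩
    · have := (C * E).rank_le_card_width
      simpa using this
    · calc r = E.rank := hE.symm
        _ = (Duio * (C * E)).rank := by rw [← Matrix.mul_assoc, hDCE]
        _ ≤ (C * E).rank := Matrix.rank_mul_le_right _ _
end
end

section
/- Suppose the historical data are generated by the system Σ and the Assumption holds (the stacked matrix [U_p; D_p; X_p] has full row rank m + r + n). Then the set of trajectories generated by Σ coincides with the set of trajectories compatible with the historical data: T_Σ = T_c(u_d, y_d, x_d). -/
open Matrix Filter

noncomputable section

/-- **Lemma 1.** If the historical data are generated by `Σ` and the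
Assumption holds (`[U_p; D_p; X_p]` has full row rank `m + r + n`), then
`T_Σ = T_c(u_d, y_d, x_d)`. -/
theorem statement6 {n m p r N : ℕ}
    (A : Matrix (Fin n) (Fin n) ℝ) (B : Matrix (Fin n) (Fin m) ℝ)
    (E : Matrix (Fin n) (Fin r) ℝ) (C : Matrix (Fin p) (Fin n) ℝ)
    (hE : E.rank = r)
    (ud : ℕ → Fin m → ℝ) (dd : ℕ → Fin r → ℝ) (xd : ℕ → Fin n → ℝ) (yd : ℕ → Fin p → ℝ)
    (hdata : GeneratedBy A B E C N ud dd xd yd)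
    (hAssumption : (Matrix.fromRows (pastMat N ud)
      (Matrix.fromRows (pastMat N dd) (pastMat N xd))).rank = m + r + n) :
    TSigma A B E C =
      TComp N (pastMat N ud) (pastMat N yd) (pastMat N xd) (futMat N xd) := by
  -- Matrix identities coming from the data being generated by Σ
  have hXf : futMat N xd = A * pastMat N xd + B * pastMat N ud + E * pastMat N dd := by
    ext i j
    have h := hdata.1 j.val j.isLt
    simp [futMat, pastMat, Matrix.add_apply, Matrix.mul_apply, Matrix.mulVec, dotProduct, h]
  have hYp : pastMat N yd = C * pastMat N xd := by
    ext i j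
    have h := hdata.2 j.val (le_of_lt j.isLt)
    simp [pastMat, Matrix.mul_apply, Matrix.mulVec, dotProduct, h]
  -- Surjectivity of the stacked data matrix
  set M := Matrix.fromRows (pastMat N ud) (Matrix.fromRows (pastMat N dd) (pastMat N xd))
  have hsurj : Function.Surjective M.mulVec := by
    have htop : LinearMap.range M.mulVecLin = ⊤ := by
      apply Submodule.eq_top_of_finrank_eq
      rw [← Matrix.rank, hAssumption]
      simp [Module.finrank_pi]
      omega
    intro v
    have : v ∈ LinearMap.range M.mulVecLin := htop ▸ Submodule.mem_top
    obtain ⟨g, hg⟩ := this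
    exact ⟨g, hg⟩
  ext w
  obtain ⟨u, y, x⟩ := w
  constructor
  · rintro ⟨d, hd⟩
    intro t
    obtain ⟨g, hg⟩ := hsurj (Sum.elim (u t) (Sum.elim (d t) (x t)))
    rw [Matrix.fromRows_mulVec, Matrix.fromRows_mulVec] at hg
    have hu : (pastMat N ud).mulVec g = u t := funext fun i => congrFun hg (Sum.inl i)
    have hdt : (pastMat N dd).mulVec g = d t := funext fun i => congrFun hg (Sum.inr (Sum.inl i))
    have hx : (pastMat N xd).mulVec g = x t := funext fun i => congrFun hg (Sum.inr (Sum.inr i))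
    refine ⟨g, hu.symm, ?_, hx.symm, ?_⟩
    · rw [hYp, ← Matrix.mulVec_mulVec, hx, (hd t).2]
    · rw [hXf, Matrix.add_mulVec, Matrix.add_mulVec, ← Matrix.mulVec_mulVec,
        ← Matrix.mulVec_mulVec, ← Matrix.mulVec_mulVec, hu, hdt, hx, (hd t).1]
  · intro hw
    choose g hg using hw
    refine ⟨fun t => (pastMat N dd).mulVec (g t), fun t => ?_⟩
    obtain ⟨hu, hy, hx, hx'⟩ := hg t
    constructor
    · rw [hx', hXf, Matrix.add_mulVec, Matrix.add_mulVec, ← Matrix.mulVec_mulVec,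
        ← Matrix.mulVec_mulVec, ← Matrix.mulVec_mulVec, ← hu, ← hx]
    · rw [hy, hYp, ← Matrix.mulVec_mulVec, ← hx]
end
end

section
/- Suppose the historical data are generated by the system Σ. If there exists a system Σ̂ of the observer form z(t+1) = A_UIO·z(t) + B^u_UIO·u(t) + B^y_UIO·y(t), x̂(t) = z(t) + D_UIO·y(t) such that T_Σ ⊆ T_Σ̂, then the matrices T_1 = B^u_UIO, T_2 = B^y_UIO − A_UIO·D_UIO, T_3 = D_UIO, T_4 = A_UIO satisfy X_f = [T_1 | T_2 | T_3 | T_4]·[U_p; Y_p; Y_f; X_p]. -/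
open Matrix Filter

noncomputable section

/-- If the historical data are generated by `Σ` and there is a
system `Σ̂` of the observer form with `T_Σ ⊆ T_Σ̂`, then
`T_1 = B^u_UIO`, `T_2 = B^y_UIO - A_UIO D_UIO`, `T_3 = D_UIO`, `T_4 = A_UIO`
satisfy `X_f = [T_1 | T_2 | T_3 | T_4] [U_p; Y_p; Y_f; X_p]`. -/
theorem statement7 {n m p r N : ℕ}
    (A : Matrix (Fin n) (Fin n) ℝ) (B : Matrix (Fin n) (Fin m) ℝ)
    (E : Matrix (Fin n) (Fin r) ℝ) (C : Matrix (Fin p) (Fin n) ℝ)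
    (hE : E.rank = r)
    (ud : ℕ → Fin m → ℝ) (dd : ℕ → Fin r → ℝ) (xd : ℕ → Fin n → ℝ) (yd : ℕ → Fin p → ℝ)
    (hdata : GeneratedBy A B E C N ud dd xd yd)
    (Auio : Matrix (Fin n) (Fin n) ℝ) (Bu : Matrix (Fin n) (Fin m) ℝ)
    (By Duio : Matrix (Fin n) (Fin p) ℝ)
    (hsub : TSigma A B E C ⊆ TObs Auio Bu By Duio) :
    futMat N xd =
      Bu * pastMat N ud + (By - Auio * Duio) * pastMat N yd +
        Duio * futMat N yd + Auio * pastMat N xd := by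
  obtain ⟨hX, hY⟩ := hdata
  classical
  -- extended input/disturbance
  set u : ℕ → Fin m → ℝ := fun t => if t < N then ud t else 0 with hu
  set dext : ℕ → Fin r → ℝ := fun t => if t < N then dd t else 0 with hd
  -- extended state by recursion
  let x : ℕ → Fin n → ℝ := fun t =>
    Nat.rec (xd 0) (fun s xs => A.mulVec xs + B.mulVec (u s) + E.mulVec (dext s)) t
  have hxstep : ∀ t, x (t + 1) = A.mulVec (x t) + B.mulVec (u t) + E.mulVec (dext t) :=
    fun t => rfl
  set y : ℕ → Fin p → ℝ := fun t => C.mulVec (x t) with hyy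
  have hx : ∀ t, t ≤ N → x t = xd t := by
    intro t
    induction t with
    | zero => intro _; rfl
    | succ s ih =>
      intro hs
      have hsN : s < N := hs
      rw [hxstep, ih (le_of_lt hsN)]
      simp only [hu, hd, if_pos hsN]
      exact (hX s hsN).symm
  have hy : ∀ t, t ≤ N → y t = yd t := by
    intro t ht
    rw [hyy]
    simp only []
    rw [hx t ht]
    exact (hY t ht).symm
  have htraj : (u, y, x) ∈ TSigma A B E C := by
    exact ⟨dext, fun t => ⟨hxstep t, rfl⟩⟩
  obtain ⟨z, hz⟩ := hsub htraj
  -- key columnwise identity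
  have key : ∀ j, j < N →
      xd (j + 1) = Bu.mulVec (ud j) + (By - Auio * Duio).mulVec (yd j) +
        Duio.mulVec (yd (j + 1)) + Auio.mulVec (xd j) := by
    intro j hj
    have hj1 : j + 1 ≤ N := hj
    have e1 : z (j + 1) = Auio.mulVec (z j) + Bu.mulVec (u j) + By.mulVec (y j) := (hz j).1
    have e2 : x j = z j + Duio.mulVec (y j) := (hz j).2
    have e3 : x (j + 1) = z (j + 1) + Duio.mulVec (y (j + 1)) := (hz (j + 1)).2
    have hzj : z j = x j - Duio.mulVec (y j) := by rw [e2]; abel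
    have : x (j + 1) = Auio.mulVec (z j) + Bu.mulVec (u j) + By.mulVec (y j) +
        Duio.mulVec (y (j + 1)) := by
      rw [e3, e1]
    rw [hzj, hx (j+1) hj1, hx j (le_of_lt hj), hy j (le_of_lt hj), hy (j+1) hj1] at this
    rw [this]
    simp only [hu, if_pos hj]
    rw [Matrix.mulVec_sub, Matrix.sub_mulVec, ← Matrix.mulVec_mulVec]
    abel
  ext i j
  have hcol : ∀ (k : ℕ) (M : Matrix (Fin n) (Fin k) ℝ) (v : Fin k → ℝ),
      True := fun _ _ _ => trivial
  have hj : (j : ℕ) < N := j.isLt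
  have := congrFun (key j hj) i
  simp only [futMat, pastMat, Matrix.add_apply, Matrix.mul_apply, Matrix.of_apply]
  rw [this]
  simp [Matrix.mulVec, dotProduct, pastMat, futMat, Pi.add_apply]
end
end

section
/- Suppose the historical data are generated by the system Σ and the Assumption holds (the stacked matrix [U_p; D_p; X_p] has full row rank m + r + n). If matrices T_1 ∈ ℝ^{n×m}, T_2, T_3 ∈ ℝ^{n×p}, T_4 ∈ ℝ^{n×n} satisfy X_f = [T_1 | T_2 | T_3 | T_4]·[U_p; Y_p; Y_f; X_p], then the identity [B | E | A] = [T_1 | T_2 | T_3 | T_4]·[I_m, 0, 0; 0, 0, C; C·B, C·E, C·A; 0, 0, I_n] holds; in particular E = T_3·C·E, and hence rank(C·E) = rank(E) = r. -/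
open Matrix Filter

noncomputable section

lemma full_row_rank_cancel {ι : Type*} [Fintype ι] {N k : ℕ}
    (S : Matrix ι (Fin N) ℝ) (hS : S.rank = Fintype.card ι)
    (M : Matrix (Fin k) ι ℝ) (hM : M * S = 0) : M = 0 := by
  have h1 : Sᵀ.rank = Fintype.card ι := by rw [Matrix.rank_transpose]; exact hS
  have h2 := LinearMap.finrank_range_add_finrank_ker (Sᵀ.mulVecLin)
  rw [Module.finrank_fintype_fun_eq_card] at h2
  have hk0 : Module.finrank ℝ (LinearMap.ker Sᵀ.mulVecLin) = 0 := by
    have : Sᵀ.rank = Module.finrank ℝ (LinearMap.range Sᵀ.mulVecLin) := rfl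
    omega
  have hker : LinearMap.ker Sᵀ.mulVecLin = ⊥ := Submodule.finrank_eq_zero.mp hk0
  ext i j
  have hrow : (fun k => M i k) ∈ LinearMap.ker Sᵀ.mulVecLin := by
    rw [LinearMap.mem_ker]
    simp only [Matrix.mulVecLin_apply]
    funext j'
    have h3 : (M * S) i j' = 0 := by rw [hM]; rfl
    simpa [Matrix.mulVec, dotProduct, Matrix.mul_apply, Matrix.transpose_apply,
      mul_comm] using h3
  rw [hker] at hrow
  exact congrFun hrow j


/-- Under the Assumption, if `X_f = [T_1 | T_2 | T_3 | T_4] [U_p; Y_p; Y_f; X_p]`,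
then `[B | E | A] = [T_1 | T_2 | T_3 | T_4] [I, 0, 0; 0, 0, C; CB, CE, CA; 0, 0, I]`
(written blockwise); in particular `E = T_3 C E`, hence `rank(CE) = rank(E) = r`. -/
theorem statement8 {n m p r N : ℕ}
    (A : Matrix (Fin n) (Fin n) ℝ) (B : Matrix (Fin n) (Fin m) ℝ)
    (E : Matrix (Fin n) (Fin r) ℝ) (C : Matrix (Fin p) (Fin n) ℝ)
    (hE : E.rank = r)
    (ud : ℕ → Fin m → ℝ) (dd : ℕ → Fin r → ℝ) (xd : ℕ → Fin n → ℝ) (yd : ℕ → Fin p → ℝ)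
    (hdata : GeneratedBy A B E C N ud dd xd yd)
    (hAssumption : (Matrix.fromRows (pastMat N ud)
      (Matrix.fromRows (pastMat N dd) (pastMat N xd))).rank = m + r + n)
    (T1 : Matrix (Fin n) (Fin m) ℝ) (T2 T3 : Matrix (Fin n) (Fin p) ℝ)
    (T4 : Matrix (Fin n) (Fin n) ℝ)
    (heq : futMat N xd =
      T1 * pastMat N ud + T2 * pastMat N yd + T3 * futMat N yd + T4 * pastMat N xd) :
    (B = T1 + T3 * (C * B) ∧ E = T3 * (C * E) ∧ A = T2 * C + T3 * (C * A) + T4) ∧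
    ((C * E).rank = E.rank ∧ E.rank = r) := by
  set Up := pastMat N ud with hUp
  set Dp := pastMat N dd with hDp
  set Xp := pastMat N xd with hXp
  -- structural matrix identities
  have hXf : futMat N xd = A * Xp + B * Up + E * Dp := by
    ext i j
    have := hdata.1 j.val j.isLt
    simp only [futMat, pastMat, Matrix.of_apply, Matrix.add_apply, Matrix.mul_apply,
      hUp, hDp, hXp]
    rw [this]
    simp [Matrix.mulVec, dotProduct, pastMat]
  have hYp : pastMat N yd = C * Xp := by
    ext i j
    have := hdata.2 j.val (le_of_lt j.isLt)
    simp only [pastMat, Matrix.of_apply, Matrix.mul_apply, hXp]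
    rw [this]
    simp [Matrix.mulVec, dotProduct, pastMat]
  have hYf : futMat N yd = C * futMat N xd := by
    ext i j
    have := hdata.2 (j.val + 1) j.isLt
    simp only [futMat, Matrix.of_apply, Matrix.mul_apply]
    rw [this]
    simp [Matrix.mulVec, dotProduct, futMat]
  -- the key linear relation
  have key : A * Xp + B * Up + E * Dp =
      T1 * Up + T2 * (C * Xp) + (T3 * (C * (A * Xp)) + T3 * (C * (B * Up)) + T3 * (C * (E * Dp))) + T4 * Xp := by
    have := heq
    rw [hYp, hYf, hXf] at this
    simp only [Matrix.mul_add] at this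
    exact this
  set M1 := B - (T1 + T3 * (C * B)) with hM1
  set M2 := E - T3 * (C * E) with hM2
  set M3 := A - (T2 * C + T3 * (C * A) + T4) with hM3
  have hsum : M1 * Up + M2 * Dp + M3 * Xp = 0 := by
    have expand : M1 * Up + M2 * Dp + M3 * Xp =
        (A * Xp + B * Up + E * Dp) -
        (T1 * Up + T2 * (C * Xp) + (T3 * (C * (A * Xp)) + T3 * (C * (B * Up)) + T3 * (C * (E * Dp))) + T4 * Xp) := by
      simp only [hM1, hM2, hM3, Matrix.sub_mul, Matrix.add_mul, Matrix.mul_add,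
        Matrix.mul_assoc]
      abel
    rw [expand, key, sub_self]
  -- apply full row rank
  have hM : Matrix.fromCols M1 (Matrix.fromCols M2 M3) *
      Matrix.fromRows Up (Matrix.fromRows Dp Xp) = 0 := by
    rw [Matrix.fromCols_mul_fromRows, Matrix.fromCols_mul_fromRows, ← add_assoc, hsum]
  have hrank : (Matrix.fromRows Up (Matrix.fromRows Dp Xp)).rank =
      Fintype.card (Fin m ⊕ (Fin r ⊕ Fin n)) := by
    rw [hAssumption]; simp [Fintype.card_sum]; omega
  have hzero := full_row_rank_cancel _ hrank _ hM
  have hM1z : M1 = 0 := by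
    ext i j
    exact congrFun (congrFun hzero i) (Sum.inl j)
  have hM2z : M2 = 0 := by
    ext i j
    exact congrFun (congrFun hzero i) (Sum.inr (Sum.inl j))
  have hM3z : M3 = 0 := by
    ext i j
    exact congrFun (congrFun hzero i) (Sum.inr (Sum.inr j))
  have hB : B = T1 + T3 * (C * B) := sub_eq_zero.mp hM1z
  have hEE : E = T3 * (C * E) := sub_eq_zero.mp hM2z
  have hA : A = T2 * C + T3 * (C * A) + T4 := sub_eq_zero.mp hM3z
  refine ⟨⟨hB, hEE, hA⟩, ?_, hE⟩
  refine le_antisymm (Matrix.rank_mul_le_right C E) ?_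
  calc E.rank = (T3 * (C * E)).rank := by rw [← hEE]
    _ ≤ (C * E).rank := Matrix.rank_mul_le_right T3 (C * E)
end
end

section
/- If the system Σ satisfies rank(C·E) = rank(E) = r, then there exists a system Σ̂ of the observer form z(t+1) = A_UIO·z(t) + B^u_UIO·u(t) + B^y_UIO·y(t), x̂(t) = z(t) + D_UIO·y(t) such that every trajectory of Σ is a trajectory of Σ̂, i.e., T_Σ ⊆ T_Σ̂. -/
open Matrix Filter

noncomputable section

lemma leftInvOfFullRank {p r : ℕ} (M : Matrix (Fin p) (Fin r) ℝ) (h : M.rank = r) :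
    ∃ F : Matrix (Fin r) (Fin p) ℝ, F * M = 1 := by
  have hker : LinearMap.ker (Matrix.toLin' M) = ⊥ := by
    have h1 := LinearMap.finrank_range_add_finrank_ker (Matrix.toLin' M)
    have hr : Module.finrank ℝ (LinearMap.range (Matrix.toLin' M)) = r := by
      have : Matrix.toLin' M = M.mulVecLin := by
        ext v i; simp [Matrix.toLin'_apply, Matrix.mulVecLin_apply]
      rw [this]; exact h
    rw [hr, Module.finrank_fin_fun (R := ℝ)] at h1
    have : Module.finrank ℝ (LinearMap.ker (Matrix.toLin' M)) = 0 := by omega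
    exact Submodule.finrank_eq_zero.mp this
  obtain ⟨g, hg⟩ := LinearMap.exists_leftInverse_of_injective (Matrix.toLin' M) hker
  refine ⟨LinearMap.toMatrix' g, ?_⟩
  have := congrArg LinearMap.toMatrix' hg
  rwa [LinearMap.toMatrix'_comp, LinearMap.toMatrix'_toLin', LinearMap.toMatrix'_id] at this

/-- If `Σ` satisfies `rank(CE) = rank(E) = r`, then there exists a
system `Σ̂` of the observer form such that every trajectory of `Σ` is a trajectory
of `Σ̂`, i.e. `T_Σ ⊆ T_Σ̂`. -/
theorem statement9 {n m p r : ℕ}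
    (A : Matrix (Fin n) (Fin n) ℝ) (B : Matrix (Fin n) (Fin m) ℝ)
    (E : Matrix (Fin n) (Fin r) ℝ) (C : Matrix (Fin p) (Fin n) ℝ)
    (hE : E.rank = r) (hCE : (C * E).rank = r) :
    ∃ (Auio : Matrix (Fin n) (Fin n) ℝ) (Bu : Matrix (Fin n) (Fin m) ℝ)
      (By Duio : Matrix (Fin n) (Fin p) ℝ),
      TSigma A B E C ⊆ TObs Auio Bu By Duio := by
  obtain ⟨F, hF⟩ := leftInvOfFullRank (C * E) hCE
  set D : Matrix (Fin n) (Fin p) ℝ := E * F with hD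
  have hDCE : D * (C * E) = E := by
    rw [hD, Matrix.mul_assoc, hF, Matrix.mul_one]
  have hE0 : (1 - D * C) * E = 0 := by
    rw [Matrix.sub_mul, Matrix.one_mul, Matrix.mul_assoc, hDCE, sub_self]
  refine ⟨(1 - D * C) * A, (1 - D * C) * B, (1 - D * C) * A * D, D, ?_⟩
  rintro ⟨u, y, x⟩ ⟨d, hd⟩
  refine ⟨fun t => x t - D.mulVec (y t), fun t => ?_⟩
  have hx1 : x (t + 1) = A.mulVec (x t) + B.mulVec (u t) + E.mulVec (d t) := (hd t).1
  have hy1 : y t = C.mulVec (x t) := (hd t).2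
  have hy2 : y (t + 1) = C.mulVec (x (t + 1)) := (hd (t + 1)).2
  constructor
  · show x (t + 1) - D.mulVec (y (t + 1))
      = ((1 - D * C) * A).mulVec (x t - D.mulVec (y t))
        + ((1 - D * C) * B).mulVec (u t) + ((1 - D * C) * A * D).mulVec (y t)
    have hDE : ((1 - D * C) * A).mulVec (x t)
        = ((1 - D * C) * A).mulVec (x t - D.mulVec (y t))
          + ((1 - D * C) * A * D).mulVec (y t) := by
      have e1 : ((1 - D * C) * A * D).mulVec (y t)
          = ((1 - D * C) * A).mulVec (D.mulVec (y t)) :=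
        (Matrix.mulVec_mulVec (y t) ((1 - D * C) * A) D).symm
      rw [e1, ← Matrix.mulVec_add, sub_add_cancel]
    have key : x (t + 1) - D.mulVec (y (t + 1))
        = ((1 - D * C) * A).mulVec (x t) + ((1 - D * C) * B).mulVec (u t) := by
      rw [hy2, hx1]
      have h1 : ∀ v : Fin n → ℝ, ((1 : Matrix (Fin n) (Fin n) ℝ) - D * C).mulVec v
          = v - D.mulVec (C.mulVec v) := by
        intro v
        rw [Matrix.sub_mulVec, Matrix.one_mulVec, ← Matrix.mulVec_mulVec]
      rw [← h1, Matrix.mulVec_add, Matrix.mulVec_add, Matrix.mulVec_mulVec,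
        Matrix.mulVec_mulVec, Matrix.mulVec_mulVec, hE0, Matrix.zero_mulVec, add_zero]
    rw [key, hDE]; abel
  · show x t = x t - D.mulVec (y t) + D.mulVec (y t)
    abel
end
end

section
/- Suppose the historical data are generated by the system Σ and the Assumption holds (the stacked matrix [U_p; D_p; X_p] has full row rank m + r + n). Then the following are equivalent: (i) there exists a system Σ̂ of the observer form such that T_Σ ⊆ T_Σ̂; (ii) there exist matrices T_1 ∈ ℝ^{n×m}, T_2, T_3 ∈ ℝ^{n×p}, T_4 ∈ ℝ^{n×n} with X_f = [T_1 | T_2 | T_3 | T_4]·[U_p; Y_p; Y_f; X_p]; (iii) ker(X_f) ⊇ ker([U_p; Y_p; Y_f; X_p]); (iv) rank(C·E) = rank(E) = r. -/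
open Matrix Filter

noncomputable section

lemma aux_rank_iff {l k : ℕ} (A : Matrix (Fin l) (Fin k) ℝ) :
    A.rank = k ↔ ∀ v : Fin k → ℝ, A.mulVec v = 0 → v = 0 := by
  rw [← Matrix.ker_mulVecLin_eq_bot_iff]
  have h := LinearMap.finrank_range_add_finrank_ker A.mulVecLin
  rw [Module.finrank_fin_fun] at h
  have hr : A.rank = Module.finrank ℝ (LinearMap.range A.mulVecLin) := rfl
  constructor
  · intro hrk
    rw [← Submodule.finrank_eq_zero (R := ℝ)]
    omega
  · intro hker
    have h0 : Module.finrank ℝ (LinearMap.ker A.mulVecLin) = 0 := by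
      rw [hker]; exact finrank_bot ℝ _
    omega

lemma aux_surj {k : Type*} [Fintype k] {N : ℕ} (M : Matrix k (Fin N) ℝ)
    (h : M.rank = Fintype.card k) : Function.Surjective M.mulVec := by
  have hrange : LinearMap.range M.mulVecLin = ⊤ := by
    apply Submodule.eq_top_of_finrank_eq
    rw [Module.finrank_pi]
    exact h
  intro w
  obtain ⟨g, hg⟩ := LinearMap.range_eq_top.mp hrange w
  exact ⟨g, hg⟩

lemma aux_ext_mulVec {l k : ℕ} {A B : Matrix (Fin l) (Fin k) ℝ}
    (h : ∀ v, A.mulVec v = B.mulVec v) : A = B :=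
  Matrix.toLin'.injective (LinearMap.ext fun v => by
    rw [Matrix.toLin'_apply, Matrix.toLin'_apply]; exact h v)

lemma aux_factor {k : Type*} [Fintype k] [DecidableEq k] {l N : ℕ}
    (M : Matrix k (Fin N) ℝ) (F : Matrix (Fin l) (Fin N) ℝ)
    (h : ∀ g, M.mulVec g = 0 → F.mulVec g = 0) :
    ∃ T : Matrix (Fin l) k ℝ, F = T * M := by
  have hker : LinearMap.ker M.mulVecLin ≤ LinearMap.ker F.mulVecLin := fun g hg =>
    LinearMap.mem_ker.mpr (h g (LinearMap.mem_ker.mp hg))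
  obtain ⟨σ, hσ⟩ := LinearMap.exists_rightInverse_of_surjective
    M.mulVecLin.rangeRestrict (LinearMap.range_rangeRestrict _)
  obtain ⟨h', hh'⟩ := LinearMap.exists_extend (F.mulVecLin.comp σ)
  refine ⟨LinearMap.toMatrix' h', ?_⟩
  apply Matrix.toLin'.injective
  refine LinearMap.ext fun g => ?_
  rw [Matrix.toLin'_apply, Matrix.toLin'_apply, ← Matrix.mulVec_mulVec]
  have h1 : (LinearMap.toMatrix' h').mulVec (M.mulVec g) = h' (M.mulVec g) := by
    rw [← Matrix.toLin'_apply, Matrix.toLin'_toMatrix']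
  rw [h1]
  have h2 : M.mulVec g = ((LinearMap.range M.mulVecLin).subtype) (M.mulVecLin.rangeRestrict g) :=
    rfl
  rw [h2, ← LinearMap.comp_apply, hh']
  show F.mulVec g = F.mulVecLin (σ (M.mulVecLin.rangeRestrict g))
  have h3 : M.mulVecLin.rangeRestrict (σ (M.mulVecLin.rangeRestrict g)) =
      M.mulVecLin.rangeRestrict g := LinearMap.congr_fun hσ (M.mulVecLin.rangeRestrict g)
  have h4 : (σ (M.mulVecLin.rangeRestrict g) - g) ∈ LinearMap.ker M.mulVecLin := by
    rw [LinearMap.mem_ker, map_sub, sub_eq_zero]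
    exact congrArg Subtype.val h3
  have h5 := hker h4
  rw [LinearMap.mem_ker, map_sub, sub_eq_zero] at h5
  exact h5.symm

/-- **Proposition 1.** Under the Assumption, the following are
equivalent: (i) there exists `Σ̂` of the observer form with `T_Σ ⊆ T_Σ̂`;
(ii) `X_f = [T_1 | T_2 | T_3 | T_4] [U_p; Y_p; Y_f; X_p]` for some `T_1, T_2, T_3, T_4`;
(iii) `ker X_f ⊇ ker [U_p; Y_p; Y_f; X_p]`; (iv) `rank(CE) = rank(E) = r`. -/
theorem statement10 {n m p r N : ℕ}
    (A : Matrix (Fin n) (Fin n) ℝ) (B : Matrix (Fin n) (Fin m) ℝ)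
    (E : Matrix (Fin n) (Fin r) ℝ) (C : Matrix (Fin p) (Fin n) ℝ)
    (hE : E.rank = r)
    (ud : ℕ → Fin m → ℝ) (dd : ℕ → Fin r → ℝ) (xd : ℕ → Fin n → ℝ) (yd : ℕ → Fin p → ℝ)
    (hdata : GeneratedBy A B E C N ud dd xd yd)
    (hAssumption : (Matrix.fromRows (pastMat N ud)
      (Matrix.fromRows (pastMat N dd) (pastMat N xd))).rank = m + r + n) :
    ((∃ (Auio : Matrix (Fin n) (Fin n) ℝ) (Bu : Matrix (Fin n) (Fin m) ℝ)
        (By Duio : Matrix (Fin n) (Fin p) ℝ),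
        TSigma A B E C ⊆ TObs Auio Bu By Duio) ↔
      (∃ (T1 : Matrix (Fin n) (Fin m) ℝ) (T2 T3 : Matrix (Fin n) (Fin p) ℝ)
        (T4 : Matrix (Fin n) (Fin n) ℝ),
        futMat N xd = T1 * pastMat N ud + T2 * pastMat N yd +
          T3 * futMat N yd + T4 * pastMat N xd)) ∧
    ((∃ (T1 : Matrix (Fin n) (Fin m) ℝ) (T2 T3 : Matrix (Fin n) (Fin p) ℝ)
        (T4 : Matrix (Fin n) (Fin n) ℝ),
        futMat N xd = T1 * pastMat N ud + T2 * pastMat N yd +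
          T3 * futMat N yd + T4 * pastMat N xd) ↔
      (∀ g : Fin N → ℝ, (pastMat N ud).mulVec g = 0 → (pastMat N yd).mulVec g = 0 →
        (futMat N yd).mulVec g = 0 → (pastMat N xd).mulVec g = 0 →
        (futMat N xd).mulVec g = 0)) ∧
    ((∀ g : Fin N → ℝ, (pastMat N ud).mulVec g = 0 → (pastMat N yd).mulVec g = 0 →
        (futMat N yd).mulVec g = 0 → (pastMat N xd).mulVec g = 0 →
        (futMat N xd).mulVec g = 0) ↔
      ((C * E).rank = r ∧ E.rank = r)) := by
  classical
  have hEinj : ∀ v, E.mulVec v = 0 → v = 0 := (aux_rank_iff E).mp hE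
  have hXfd : futMat N xd = A * pastMat N xd + B * pastMat N ud + E * pastMat N dd := by
    ext i j
    have h1 := hdata.1 j.val j.isLt
    simp only [futMat, pastMat, Matrix.of_apply, Matrix.add_apply, Matrix.mul_apply, h1,
      Pi.add_apply, Matrix.mulVec, dotProduct]
  have hYpd : pastMat N yd = C * pastMat N xd := by
    ext i j
    have h2 := hdata.2 j.val (le_of_lt j.isLt)
    simp only [pastMat, Matrix.of_apply, Matrix.mul_apply, h2, Matrix.mulVec, dotProduct]
  have hYfd : futMat N yd = C * futMat N xd := by
    ext i j
    have h2 := hdata.2 (j.val + 1) (Nat.succ_le_of_lt j.isLt)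
    simp only [futMat, Matrix.of_apply, Matrix.mul_apply, h2, Matrix.mulVec, dotProduct]
  -- (iii) ↔ (iv)
  have hc3 : (∀ g : Fin N → ℝ, (pastMat N ud).mulVec g = 0 → (pastMat N yd).mulVec g = 0 →
        (futMat N yd).mulVec g = 0 → (pastMat N xd).mulVec g = 0 →
        (futMat N xd).mulVec g = 0) ↔ ((C * E).rank = r ∧ E.rank = r) := by
    constructor
    · intro h3
      refine ⟨(aux_rank_iff _).mpr fun v hv => ?_, hE⟩
      have hsurj : Function.Surjective (Matrix.fromRows (pastMat N ud)
          (Matrix.fromRows (pastMat N dd) (pastMat N xd))).mulVec := by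
        apply aux_surj
        rw [hAssumption]
        simp only [Fintype.card_sum, Fintype.card_fin]
        omega
      obtain ⟨g, hg⟩ := hsurj (Sum.elim 0 (Sum.elim v 0))
      rw [Matrix.fromRows_mulVec, Matrix.fromRows_mulVec] at hg
      have hu : (pastMat N ud).mulVec g = 0 := funext fun i => congrFun hg (Sum.inl i)
      have hd : (pastMat N dd).mulVec g = v := funext fun i => congrFun hg (Sum.inr (Sum.inl i))
      have hx : (pastMat N xd).mulVec g = 0 := funext fun i => congrFun hg (Sum.inr (Sum.inr i))
      have hxf : (futMat N xd).mulVec g = E.mulVec v := by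
        rw [hXfd, Matrix.add_mulVec, Matrix.add_mulVec, ← Matrix.mulVec_mulVec,
          ← Matrix.mulVec_mulVec, ← Matrix.mulVec_mulVec, hu, hx, hd, Matrix.mulVec_zero,
          Matrix.mulVec_zero, zero_add, zero_add]
      have hyp : (pastMat N yd).mulVec g = 0 := by
        rw [hYpd, ← Matrix.mulVec_mulVec, hx, Matrix.mulVec_zero]
      have hyf : (futMat N yd).mulVec g = 0 := by
        rw [hYfd, ← Matrix.mulVec_mulVec, hxf, Matrix.mulVec_mulVec, hv]
      have hz := h3 g hu hyp hyf hx
      rw [hxf] at hz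
      exact hEinj v hz
    · rintro ⟨hCE, -⟩ g hu hyp hyf hx
      have hCEinj := (aux_rank_iff _).mp hCE
      have hxf : (futMat N xd).mulVec g = E.mulVec ((pastMat N dd).mulVec g) := by
        rw [hXfd, Matrix.add_mulVec, Matrix.add_mulVec, ← Matrix.mulVec_mulVec,
          ← Matrix.mulVec_mulVec, ← Matrix.mulVec_mulVec, hu, hx, Matrix.mulVec_zero,
          Matrix.mulVec_zero, zero_add, zero_add]
      have hd0 : (pastMat N dd).mulVec g = 0 := by
        apply hCEinj
        calc (C * E).mulVec ((pastMat N dd).mulVec g)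
            = C.mulVec (E.mulVec ((pastMat N dd).mulVec g)) :=
              (Matrix.mulVec_mulVec _ _ _).symm
          _ = C.mulVec ((futMat N xd).mulVec g) := by rw [hxf]
          _ = (futMat N yd).mulVec g := by rw [hYfd, ← Matrix.mulVec_mulVec]
          _ = 0 := hyf
      rw [hxf, hd0, Matrix.mulVec_zero]
  -- (ii) ↔ (iii)
  have hc2 : (∃ (T1 : Matrix (Fin n) (Fin m) ℝ) (T2 T3 : Matrix (Fin n) (Fin p) ℝ)
        (T4 : Matrix (Fin n) (Fin n) ℝ),
        futMat N xd = T1 * pastMat N ud + T2 * pastMat N yd +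
          T3 * futMat N yd + T4 * pastMat N xd) ↔
      (∀ g : Fin N → ℝ, (pastMat N ud).mulVec g = 0 → (pastMat N yd).mulVec g = 0 →
        (futMat N yd).mulVec g = 0 → (pastMat N xd).mulVec g = 0 →
        (futMat N xd).mulVec g = 0) := by
    constructor
    · rintro ⟨T1, T2, T3, T4, hT⟩ g hu hyp hyf hx
      rw [hT, Matrix.add_mulVec, Matrix.add_mulVec, Matrix.add_mulVec,
        ← Matrix.mulVec_mulVec, ← Matrix.mulVec_mulVec, ← Matrix.mulVec_mulVec,
        ← Matrix.mulVec_mulVec, hu, hyp, hyf, hx]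
      simp [Matrix.mulVec_zero]
    · intro h3
      obtain ⟨T, hT⟩ := aux_factor (Matrix.fromRows (pastMat N ud)
        (Matrix.fromRows (pastMat N yd) (Matrix.fromRows (futMat N yd) (pastMat N xd))))
        (futMat N xd) (fun g hg => by
          rw [Matrix.fromRows_mulVec, Matrix.fromRows_mulVec, Matrix.fromRows_mulVec] at hg
          exact h3 g (funext fun i => congrFun hg (Sum.inl i))
            (funext fun i => congrFun hg (Sum.inr (Sum.inl i)))
            (funext fun i => congrFun hg (Sum.inr (Sum.inr (Sum.inl i))))
            (funext fun i => congrFun hg (Sum.inr (Sum.inr (Sum.inr i)))))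
      refine ⟨Matrix.toCols₁ T, (Matrix.toCols₂ T).toCols₁, (Matrix.toCols₂ T).toCols₂.toCols₁,
        (Matrix.toCols₂ T).toCols₂.toCols₂, ?_⟩
      rw [hT]
      conv_lhs => rw [← Matrix.fromCols_toCols T, Matrix.fromCols_mul_fromRows,
        ← Matrix.fromCols_toCols (Matrix.toCols₂ T), Matrix.fromCols_mul_fromRows,
        ← Matrix.fromCols_toCols (Matrix.toCols₂ T).toCols₂,
        Matrix.fromCols_mul_fromRows]
      abel
  -- (i) ↔ rank CE = r
  have hc1 : (∃ (Auio : Matrix (Fin n) (Fin n) ℝ) (Bu : Matrix (Fin n) (Fin m) ℝ)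
        (By Duio : Matrix (Fin n) (Fin p) ℝ),
        TSigma A B E C ⊆ TObs Auio Bu By Duio) ↔ (C * E).rank = r := by
    constructor
    · rintro ⟨Auio, Bu, By, D, hsub⟩
      have hDCE : D * (C * E) = E := by
        apply aux_ext_mulVec
        intro δ
        set d : ℕ → Fin r → ℝ := fun t => if t = 0 then δ else 0 with hd
        set u : ℕ → Fin m → ℝ := fun _ => 0 with hu
        set x : ℕ → Fin n → ℝ := fun t =>
          Nat.rec (0 : Fin n → ℝ) (fun s xs => A.mulVec xs + B.mulVec (u s) + E.mulVec (d s)) t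
          with hxdef
        set y : ℕ → Fin p → ℝ := fun t => C.mulVec (x t) with hy
        have htraj : IsSysTraj A B E C u y x d := fun t => ⟨rfl, rfl⟩
        obtain ⟨z, hz⟩ := hsub (⟨d, htraj⟩ : (u, y, x) ∈ TSigma A B E C)
        replace hz : IsObsTraj Auio Bu By D u y x z := hz
        have hx0 : x 0 = 0 := rfl
        have hy0 : y 0 = 0 := by
          show C.mulVec (x 0) = 0
          rw [hx0, Matrix.mulVec_zero]
        have hz0 : z 0 = 0 := by
          have h := (hz 0).2
          rw [hx0, hy0, Matrix.mulVec_zero, add_zero] at h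
          exact h.symm
        have hu0 : u 0 = 0 := rfl
        have hz1 : z 1 = 0 := by
          have h := (hz 0).1
          rw [hz0, hy0, hu0] at h
          simpa [Matrix.mulVec_zero] using h
        have hd0 : d 0 = δ := rfl
        have hx1 : x 1 = E.mulVec δ := by
          show A.mulVec (x 0) + B.mulVec (u 0) + E.mulVec (d 0) = E.mulVec δ
          rw [hx0, hu0, hd0, Matrix.mulVec_zero, Matrix.mulVec_zero, zero_add, zero_add]
        have hy1 : y 1 = C.mulVec (E.mulVec δ) := by
          show C.mulVec (x 1) = _
          rw [hx1]
        have hkey := (hz 1).2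
        rw [hz1, zero_add, hy1, hx1, Matrix.mulVec_mulVec, Matrix.mulVec_mulVec] at hkey
        rw [← Matrix.mul_assoc]
        exact hkey.symm
      refine (aux_rank_iff _).mpr fun v hv => hEinj v ?_
      rw [← hDCE, ← Matrix.mulVec_mulVec, hv, Matrix.mulVec_zero]
    · intro hCE
      have hCEker : LinearMap.ker (C * E).mulVecLin = ⊥ :=
        Matrix.ker_mulVecLin_eq_bot_iff.mpr ((aux_rank_iff _).mp hCE)
      obtain ⟨L', hL'⟩ := LinearMap.exists_leftInverse_of_injective (C * E).mulVecLin hCEker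
      set L : Matrix (Fin r) (Fin p) ℝ := LinearMap.toMatrix' L' with hLdef
      have hL : L * (C * E) = 1 := by
        apply aux_ext_mulVec
        intro v
        rw [← Matrix.mulVec_mulVec, Matrix.one_mulVec]
        have h1 : L.mulVec ((C * E).mulVec v) = L' ((C * E).mulVecLin v) := by
          rw [hLdef, ← Matrix.toLin'_apply, Matrix.toLin'_toMatrix']; rfl
        rw [h1, ← LinearMap.comp_apply, hL', LinearMap.id_apply]
      obtain ⟨D, hD⟩ : ∃ D : Matrix (Fin n) (Fin p) ℝ, D * (C * E) = E :=
        ⟨E * L, by rw [Matrix.mul_assoc, hL, Matrix.mul_one]⟩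
      obtain ⟨P, hPdef⟩ : ∃ P : Matrix (Fin n) (Fin n) ℝ, P = 1 - D * C := ⟨_, rfl⟩
      have hPE : P * E = 0 := by
        rw [hPdef, Matrix.sub_mul, Matrix.one_mul, Matrix.mul_assoc, hD, sub_self]
      refine ⟨P * A, P * B, P * A * D, D, ?_⟩
      rintro ⟨u, y, x⟩ ⟨d, htraj⟩
      replace htraj : IsSysTraj A B E C u y x d := htraj
      show ∃ z, IsObsTraj (P * A) (P * B) (P * A * D) D u y x z
      have hR : ∀ (v : Fin n → ℝ) (w : Fin m → ℝ),
          (P * A).mulVec (v - D.mulVec (C.mulVec v)) + (P * B).mulVec w +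
            (P * A * D).mulVec (C.mulVec v) = (P * A).mulVec v + (P * B).mulVec w := by
        intro v w
        rw [Matrix.mulVec_sub, Matrix.mulVec_mulVec, Matrix.mulVec_mulVec]
        abel
      refine ⟨fun t => x t - D.mulVec (y t), fun t => ⟨?_, by
        show x t = (x t - D.mulVec (y t)) + D.mulVec (y t); abel⟩⟩
      show x (t + 1) - D.mulVec (y (t + 1)) =
        (P * A).mulVec (x t - D.mulVec (y t)) + (P * B).mulVec (u t) +
          (P * A * D).mulVec (y t)
      have hy := fun s => (htraj s).2
      have step := (htraj t).1
      have lhs : x (t + 1) - D.mulVec (y (t + 1)) =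
          (P * A).mulVec (x t) + (P * B).mulVec (u t) := by
        rw [hy (t + 1)]
        have h1 : x (t + 1) - D.mulVec (C.mulVec (x (t + 1))) = P.mulVec (x (t + 1)) := by
          rw [hPdef, Matrix.sub_mulVec, Matrix.one_mulVec, ← Matrix.mulVec_mulVec]
        rw [h1, step, Matrix.mulVec_add, Matrix.mulVec_add, Matrix.mulVec_mulVec,
          Matrix.mulVec_mulVec, Matrix.mulVec_mulVec, hPE, Matrix.zero_mulVec, add_zero]
      rw [lhs, hy t]
      exact (hR (x t) (u t)).symm
  have hii_iff : (∃ (T1 : Matrix (Fin n) (Fin m) ℝ) (T2 T3 : Matrix (Fin n) (Fin p) ℝ)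
        (T4 : Matrix (Fin n) (Fin n) ℝ),
        futMat N xd = T1 * pastMat N ud + T2 * pastMat N yd +
          T3 * futMat N yd + T4 * pastMat N xd) ↔ (C * E).rank = r := by
    rw [hc2, hc3]
    exact ⟨And.left, fun h => ⟨h, hE⟩⟩
  exact ⟨hc1.trans hii_iff.symm, hc2, hc3⟩
end
end

section
/- Suppose the historical data are generated by the system Σ and the Assumption holds (the stacked matrix [U_p; D_p; X_p] has full row rank m + r + n). If there exist matrices T_1 ∈ ℝ^{n×m}, T_2, T_3 ∈ ℝ^{n×p}, T_4 ∈ ℝ^{n×n} with T_4 Schur stable such that X_f = [T_1 | T_2 | T_3 | T_4]·[U_p; Y_p; Y_f; X_p], then: ker(X_f) ⊇ ker([U_p; Y_p; Y_f; X_p]), and rank [z·X_p − X_f; U_p; Y_p] = n + m + r for all z ∈ ℂ with |z| ≥ 1. -/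
open Matrix Filter

noncomputable section

section AuxLemmas

open Matrix

variable {m' n' : Type*} [Fintype m'] [Fintype n'] {K : Type*} [Field K]

lemma matrix_eq_of_forall_mulVec_eq [DecidableEq n'] (M N : Matrix m' n' K)
    (h : ∀ v, M *ᵥ v = N *ᵥ v) : M = N := by
  ext i j
  have := congrFun (h (Pi.single j 1)) i
  simpa using this

lemma mulVecLin_surjective_of_rank [DecidableEq m'] (M : Matrix m' n' K)
    (h : M.rank = Fintype.card m') : Function.Surjective M.mulVecLin := by
  rw [← LinearMap.range_eq_top]
  apply Submodule.eq_top_of_finrank_eq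
  rw [← Matrix.rank, h, Module.finrank_fintype_fun_eq_card]

lemma mulVecLin_injective_of_rank [DecidableEq n'] (M : Matrix m' n' K)
    (h : M.rank = Fintype.card n') : Function.Injective M.mulVecLin := by
  rw [← LinearMap.ker_eq_bot, ← Submodule.finrank_eq_zero (R := K)]
  have h2 := LinearMap.finrank_range_add_finrank_ker M.mulVecLin
  rw [← Matrix.rank, h, Module.finrank_fintype_fun_eq_card] at h2
  omega

end AuxLemmas

section MapLemmas
open Matrix
lemma mapC_add {m' n' : Type*} (M N : Matrix m' n' ℝ) :
    (M + N).map Complex.ofReal = M.map Complex.ofReal + N.map Complex.ofReal := by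
  ext i j; simp

lemma mapC_mul {m' n' o' : Type*} [Fintype n'] (M : Matrix m' n' ℝ) (N : Matrix n' o' ℝ) :
    (M * N).map Complex.ofReal = M.map Complex.ofReal * N.map Complex.ofReal := by
  ext i j; simp [Matrix.mul_apply]
end MapLemmas

/-- Under the Assumption, if `X_f = [T_1 | T_2 | T_3 | T_4] [U_p; Y_p; Y_f; X_p]`
for some `T_1, T_2, T_3, T_4` with `T_4` Schur stable, then
`ker X_f ⊇ ker [U_p; Y_p; Y_f; X_p]` and
`rank [z X_p - X_f; U_p; Y_p] = n + m + r` for all `z ∈ ℂ` with `|z| ≥ 1`. -/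
theorem statement11 {n m p r N : ℕ}
    (A : Matrix (Fin n) (Fin n) ℝ) (B : Matrix (Fin n) (Fin m) ℝ)
    (E : Matrix (Fin n) (Fin r) ℝ) (C : Matrix (Fin p) (Fin n) ℝ)
    (hE : E.rank = r)
    (ud : ℕ → Fin m → ℝ) (dd : ℕ → Fin r → ℝ) (xd : ℕ → Fin n → ℝ) (yd : ℕ → Fin p → ℝ)
    (hdata : GeneratedBy A B E C N ud dd xd yd)
    (hAssumption : (Matrix.fromRows (pastMat N ud)
      (Matrix.fromRows (pastMat N dd) (pastMat N xd))).rank = m + r + n)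
    (T1 : Matrix (Fin n) (Fin m) ℝ) (T2 T3 : Matrix (Fin n) (Fin p) ℝ)
    (T4 : Matrix (Fin n) (Fin n) ℝ)
    (hT4 : SchurStable T4)
    (heq : futMat N xd =
      T1 * pastMat N ud + T2 * pastMat N yd + T3 * futMat N yd + T4 * pastMat N xd) :
    (∀ g : Fin N → ℝ, (pastMat N ud).mulVec g = 0 → (pastMat N yd).mulVec g = 0 →
      (futMat N yd).mulVec g = 0 → (pastMat N xd).mulVec g = 0 →
      (futMat N xd).mulVec g = 0) ∧
    (∀ z : ℂ, 1 ≤ ‖z‖ →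
      (Matrix.fromRows
        (z • (pastMat N xd).map Complex.ofReal - (futMat N xd).map Complex.ofReal)
        (Matrix.fromRows ((pastMat N ud).map Complex.ofReal)
          ((pastMat N yd).map Complex.ofReal))).rank = n + m + r) := by
  set Up := pastMat N ud with hUp
  set Dp := pastMat N dd with hDp
  set Xp := pastMat N xd with hXp
  set Xf := futMat N xd with hXfdef
  set Yp := pastMat N yd with hYpdef
  set Yf := futMat N yd with hYfdef
  constructor
  · intro g h1 h2 h3 h4
    rw [heq]
    simp only [Matrix.add_mulVec, ← Matrix.mulVec_mulVec, h1, h2, h3, h4, Matrix.mulVec_zero,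
      add_zero, zero_add]
  -- data relations
  have hXf : Xf = A * Xp + B * Up + E * Dp := by
    ext i j
    have h1 := congrFun (hdata.1 j.val j.isLt) i
    simpa [hXfdef, hXp, hUp, hDp, futMat, pastMat, Matrix.mul_apply, Matrix.mulVec,
      dotProduct] using h1
  have hYp : Yp = C * Xp := by
    ext i j
    have h1 := congrFun (hdata.2 j.val j.isLt.le) i
    simpa [hYpdef, hXp, pastMat, Matrix.mul_apply, Matrix.mulVec, dotProduct] using h1
  have hYf : Yf = C * Xf := by
    ext i j
    have h1 := congrFun (hdata.2 (j.val + 1) j.isLt) i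
    simpa [hYfdef, hXfdef, futMat, Matrix.mul_apply, Matrix.mulVec, dotProduct] using h1
  -- surjectivity of the stacked data matrix
  have hsurj : Function.Surjective (Matrix.fromRows Up (Matrix.fromRows Dp Xp)).mulVecLin := by
    apply mulVecLin_surjective_of_rank
    rw [hAssumption]
    simp [Fintype.card_sum]
    omega
  have hsplit : ∀ (a : Fin m → ℝ) (b : Fin r → ℝ) (c : Fin n → ℝ),
      ∃ g, Up *ᵥ g = a ∧ Dp *ᵥ g = b ∧ Xp *ᵥ g = c := by
    intro a b c
    obtain ⟨g, hg⟩ := hsurj (Sum.elim a (Sum.elim b c))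
    rw [Matrix.mulVecLin_apply, Matrix.fromRows_mulVec, Matrix.fromRows_mulVec] at hg
    refine ⟨g, funext fun i => ?_, funext fun i => ?_, funext fun i => ?_⟩
    · simpa using congrFun hg (Sum.inl i)
    · simpa using congrFun hg (Sum.inr (Sum.inl i))
    · simpa using congrFun hg (Sum.inr (Sum.inr i))
  -- coefficient identities
  have hid1 : E = T3 * (C * E) := by
    apply matrix_eq_of_forall_mulVec_eq
    intro w
    obtain ⟨g, hgu, hgd, hgx⟩ := hsplit 0 w 0
    have hXfg : Xf *ᵥ g = E *ᵥ w := by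
      rw [hXf]
      simp [Matrix.add_mulVec, ← Matrix.mulVec_mulVec, hgu, hgd, hgx]
    have h0 := congrArg (· *ᵥ g) heq
    simp only [Matrix.add_mulVec, ← Matrix.mulVec_mulVec, hgu, hgd, hgx, hXfg,
      hYp, hYf, Matrix.mulVec_zero, add_zero, zero_add] at h0
    simpa [← Matrix.mulVec_mulVec] using h0
  have hid2 : A = T2 * C + T3 * (C * A) + T4 := by
    apply matrix_eq_of_forall_mulVec_eq
    intro v
    obtain ⟨g, hgu, hgd, hgx⟩ := hsplit 0 0 v
    have hXfg : Xf *ᵥ g = A *ᵥ v := by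
      rw [hXf]
      simp [Matrix.add_mulVec, ← Matrix.mulVec_mulVec, hgu, hgd, hgx]
    have h0 := congrArg (· *ᵥ g) heq
    simp only [Matrix.add_mulVec, ← Matrix.mulVec_mulVec, hgu, hgd, hgx, hXfg,
      hYp, hYf, Matrix.mulVec_zero, add_zero, zero_add] at h0
    simpa [Matrix.add_mulVec, ← Matrix.mulVec_mulVec] using h0
  -- complex versions
  intro z hz
  set Ac := A.map Complex.ofReal with hAc
  set Bc := B.map Complex.ofReal with hBc
  set Ec := E.map Complex.ofReal with hEc
  set Cc := C.map Complex.ofReal with hCc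
  set T2c := T2.map Complex.ofReal with hT2c
  set T3c := T3.map Complex.ofReal with hT3c
  set T4c := T4.map Complex.ofReal with hT4c
  set Upc := Up.map Complex.ofReal with hUpc
  set Dpc := Dp.map Complex.ofReal with hDpc
  set Xpc := Xp.map Complex.ofReal with hXpc
  set Xfc := Xf.map Complex.ofReal with hXfc
  set Ypc := Yp.map Complex.ofReal with hYpc
  have hXfC : Xfc = Ac * Xpc + Bc * Upc + Ec * Dpc := by
    rw [hXfc, hXf, mapC_add, mapC_add, mapC_mul, mapC_mul, mapC_mul]
  have hYpC : Ypc = Cc * Xpc := by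
    rw [hYpc, hYp, mapC_mul]
  have hid1C : Ec = T3c * (Cc * Ec) := by
    rw [hEc]
    conv_lhs => rw [hid1]
    rw [mapC_mul, mapC_mul]
  have hid2C : Ac = T2c * Cc + T3c * (Cc * Ac) + T4c := by
    rw [hAc]
    conv_lhs => rw [hid2]
    rw [mapC_add, mapC_add, mapC_mul, mapC_mul, mapC_mul]
  -- the factorization
  set Hc : Matrix (Fin m ⊕ (Fin r ⊕ Fin n)) (Fin N) ℂ :=
    Matrix.fromRows Upc (Matrix.fromRows Dpc Xpc) with hHc
  set Mcoef : Matrix (Fin n ⊕ (Fin m ⊕ Fin p)) (Fin m ⊕ (Fin r ⊕ Fin n)) ℂ :=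
    Matrix.fromRows
      (Matrix.fromCols (-Bc) (Matrix.fromCols (-Ec) (z • 1 - Ac)))
      (Matrix.fromRows
        (Matrix.fromCols 1 (Matrix.fromCols 0 0))
        (Matrix.fromCols 0 (Matrix.fromCols 0 Cc))) with hMcoef
  have hblock1 : z • Xpc - Xfc = (-Bc) * Upc + ((-Ec) * Dpc + (z • 1 - Ac) * Xpc) := by
    rw [hXfC, Matrix.neg_mul, Matrix.neg_mul, Matrix.sub_mul, Matrix.smul_mul, Matrix.one_mul]
    abel
  have hblock2 : Upc = (1 : Matrix (Fin m) (Fin m) ℂ) * Upc +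
      ((0 : Matrix (Fin m) (Fin r) ℂ) * Dpc + (0 : Matrix (Fin m) (Fin n) ℂ) * Xpc) := by
    simp
  have hblock3 : Ypc = (0 : Matrix (Fin p) (Fin m) ℂ) * Upc +
      ((0 : Matrix (Fin p) (Fin r) ℂ) * Dpc + Cc * Xpc) := by
    rw [hYpC]
    simp
  have hfact : Matrix.fromRows (z • Xpc - Xfc) (Matrix.fromRows Upc Ypc) = Mcoef * Hc := by
    rw [hMcoef, hHc, Matrix.fromRows_mul, Matrix.fromRows_mul, Matrix.fromCols_mul_fromRows,
      Matrix.fromCols_mul_fromRows, Matrix.fromCols_mul_fromRows,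
      Matrix.fromCols_mul_fromRows, Matrix.fromCols_mul_fromRows,
      Matrix.fromCols_mul_fromRows, ← hblock1, ← hblock2, ← hblock3]
  -- surjectivity of Hc
  have hsurjC : Function.Surjective Hc.mulVecLin := by
    intro w
    obtain ⟨g1, hg1⟩ := hsurj (fun i => (w i).re)
    obtain ⟨g2, hg2⟩ := hsurj (fun i => (w i).im)
    have key : ∀ g : Fin N → ℝ, Hc.mulVecLin (fun j => (g j : ℂ)) =
        fun i => ((Matrix.fromRows Up (Matrix.fromRows Dp Xp)).mulVecLin g i : ℂ) := by
      intro g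
      funext i
      simp only [Matrix.mulVecLin_apply, hHc, Matrix.fromRows_mulVec]
      rcases i with i | i | i <;>
        simp [hUpc, hDpc, hXpc, Matrix.mulVec, dotProduct, Matrix.map_apply]
    refine ⟨(fun j => (g1 j : ℂ)) + Complex.I • (fun j => (g2 j : ℂ)), ?_⟩
    rw [map_add, LinearMap.map_smul, key g1, key g2, hg1, hg2]
    funext i
    simp only [Pi.add_apply, Pi.smul_apply, smul_eq_mul]
    rw [mul_comm]
    exact Complex.re_add_im (w i)
  -- injectivity of Mcoef
  have hEinj : Function.Injective E.mulVecLin := by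
    apply mulVecLin_injective_of_rank
    simpa using hE
  have hinjC : Function.Injective Mcoef.mulVecLin := by
    rw [← LinearMap.ker_eq_bot, Submodule.eq_bot_iff]
    intro v hv
    rw [LinearMap.mem_ker, Matrix.mulVecLin_apply] at hv
    set u : Fin m → ℂ := fun i => v (Sum.inl i) with hu
    set d : Fin r → ℂ := fun i => v (Sum.inr (Sum.inl i)) with hd
    set x : Fin n → ℂ := fun i => v (Sum.inr (Sum.inr i)) with hx
    have hv' : v = Sum.elim u (Sum.elim d x) := by
      funext i
      rcases i with i | i | i <;> rfl
    rw [hv', hMcoef, Matrix.fromRows_mulVec, Matrix.fromRows_mulVec,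
      Matrix.fromCols_mulVec_sumElim, Matrix.fromCols_mulVec_sumElim,
      Matrix.fromCols_mulVec_sumElim, Matrix.fromCols_mulVec_sumElim,
      Matrix.fromCols_mulVec_sumElim, Matrix.fromCols_mulVec_sumElim] at hv
    have hu0 : u = 0 := by
      funext i
      have := congrFun hv (Sum.inr (Sum.inl i))
      simpa [Matrix.one_mulVec, Matrix.zero_mulVec] using this
    have hCx : Cc *ᵥ x = 0 := by
      funext i
      have := congrFun hv (Sum.inr (Sum.inr i))
      simpa [Matrix.zero_mulVec] using this
    have hAx : Ac *ᵥ x = z • x - Ec *ᵥ d := by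
      have h1' : -Bc *ᵥ u + (-Ec *ᵥ d + (z • 1 - Ac) *ᵥ x) = 0 := by
        funext i
        have := congrFun hv (Sum.inl i)
        simpa using this
      rw [hu0, Matrix.mulVec_zero, zero_add, Matrix.sub_mulVec, Matrix.smul_mulVec,
        Matrix.one_mulVec, Matrix.neg_mulVec, neg_add_eq_sub, sub_sub, sub_eq_zero] at h1'
      exact eq_sub_iff_add_eq.mpr h1'.symm
    have hT4x : T4c *ᵥ x = z • x := by
      have h2 := congrArg (· *ᵥ x) hid2C
      simp only [Matrix.add_mulVec, ← Matrix.mulVec_mulVec] at h2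
      rw [hCx, Matrix.mulVec_zero, zero_add, hAx, Matrix.mulVec_sub, Matrix.mulVec_smul, hCx,
        smul_zero, zero_sub, Matrix.mulVec_neg, Matrix.mulVec_mulVec, Matrix.mulVec_mulVec,
        Matrix.mul_assoc, ← hid1C, sub_eq_iff_eq_add] at h2
      rw [h2]
      abel
    have hx0 : x = 0 := by
      by_contra hxne
      have hdet : (z • (1 : Matrix (Fin n) (Fin n) ℂ) - T4c).det = 0 := by
        rw [← Matrix.exists_mulVec_eq_zero_iff]
        refine ⟨x, hxne, ?_⟩
        rw [Matrix.sub_mulVec, Matrix.smul_mulVec, Matrix.one_mulVec, hT4x, sub_self]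
      have hmem : z ∈ spectrum ℂ T4c := by
        rw [spectrum.mem_iff]
        intro hunit
        rw [Matrix.isUnit_iff_isUnit_det, Algebra.algebraMap_eq_smul_one, hdet] at hunit
        exact hunit.ne_zero rfl
      exact absurd (hT4 z hmem) (not_lt.mpr hz)
    have hd0 : d = 0 := by
      have hEd : Ec *ᵥ d = 0 := by
        have h3 := hAx
        rw [hx0, Matrix.mulVec_zero, smul_zero, zero_sub] at h3
        simpa using h3.symm
      have hre : (fun k => (d k).re) = 0 := by
        apply hEinj
        rw [Matrix.mulVecLin_apply, Matrix.mulVecLin_apply, Matrix.mulVec_zero]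
        funext i
        have := congrArg Complex.re (congrFun hEd i)
        simpa [Matrix.mulVec, dotProduct, Complex.re_sum, Complex.mul_re, hEc] using this
      have him : (fun k => (d k).im) = 0 := by
        apply hEinj
        rw [Matrix.mulVecLin_apply, Matrix.mulVecLin_apply, Matrix.mulVec_zero]
        funext i
        have := congrArg Complex.im (congrFun hEd i)
        simpa [Matrix.mulVec, dotProduct, Complex.im_sum, Complex.mul_im, hEc] using this
      funext k
      have h1 := congrFun hre k
      have h2 := congrFun him k
      simp only [Pi.zero_apply] at h1 h2
      exact Complex.ext h1 h2
    rw [hv', hu0, hd0, hx0]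
    simp
  -- conclude
  rw [hfact, Matrix.rank, Matrix.mulVecLin_mul,
    LinearMap.range_comp_of_range_eq_top _ (LinearMap.range_eq_top.mpr hsurjC),
    LinearMap.finrank_range_of_inj hinjC, Module.finrank_fintype_fun_eq_card]
  simp [Fintype.card_sum]
  omega
end
end

section
/- Suppose the historical data are generated by the system Σ and the Assumption holds (the stacked matrix [U_p; D_p; X_p] has full row rank m + r + n). If ker(X_f) ⊇ ker([U_p; Y_p; Y_f; X_p]) and rank [z·X_p − X_f; U_p; Y_p] = n + m + r for all z ∈ ℂ with |z| ≥ 1, then the triple (A, E, C) is strong* detectable. -/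
open Matrix Filter

noncomputable section

namespace S12Aux

section Aux

attribute [local instance] Matrix.linftyOpNormedRing Matrix.linftyOpNormedAlgebra

/-- entrywise complexification commutes with mulVec -/
lemma mulVec_mapC {a b : Type*} [Fintype b] (M : Matrix a b ℝ) (x : b → ℝ) :
    (M.map Complex.ofReal) *ᵥ (fun i => (x i : ℂ)) = fun i => ((M *ᵥ x) i : ℂ) := by
  funext i
  simp [Matrix.mulVec, dotProduct, Matrix.map_apply]

lemma surj_of_rank_eq_card {K : Type*} [Field K] {a b : Type*} [Fintype a] [Fintype b]
    (M : Matrix a b K) (h : M.rank = Fintype.card a) :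
    Function.Surjective M.mulVecLin := by
  rw [← LinearMap.range_eq_top]
  apply Submodule.eq_top_of_finrank_eq
  rw [Matrix.rank] at h
  rw [h, Module.finrank_pi]

lemma inj_of_rank_eq_card {K : Type*} [Field K] {a b : Type*} [Fintype a] [Fintype b]
    (M : Matrix a b K) (h : M.rank = Fintype.card b) :
    Function.Injective M.mulVecLin := by
  rw [← LinearMap.ker_eq_bot]
  have h2 := LinearMap.finrank_range_add_finrank_ker M.mulVecLin
  rw [Matrix.rank] at h
  rw [h, Module.finrank_pi] at h2
  have : Module.finrank K (LinearMap.ker M.mulVecLin) = 0 := by omega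
  exact Submodule.finrank_eq_zero.mp this

/-- linear maps on finite product spaces are continuous; mulVec pres. limits -/
lemma tendsto_linmap_zero {K : Type*} [NontriviallyNormedField K] {a b : Type*}
    [Fintype a] (f : (a → K) →ₗ[K] (b → K)) (x : ℕ → a → K)
    (hx : Tendsto x atTop (nhds 0)) : Tendsto (fun t => f (x t)) atTop (nhds 0) := by
  have hc : Continuous f := LinearMap.continuous_on_pi f
  have := (hc.tendsto 0).comp hx
  simpa [Function.comp_def] using this

lemma tendsto_mulVec_zero {K : Type*} [NontriviallyNormedField K] {a b : Type*}
    [Fintype a] [Fintype b] (M : Matrix b a K) (x : ℕ → a → K)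
    (hx : Tendsto x atTop (nhds 0)) : Tendsto (fun t => M *ᵥ x t) atTop (nhds 0) :=
  tendsto_linmap_zero M.mulVecLin x hx



lemma mapC_add {a b : Type*} (M N : Matrix a b ℝ) :
    (M + N).map Complex.ofReal = M.map Complex.ofReal + N.map Complex.ofReal := by
  ext i j
  simp [Matrix.map_apply, Matrix.add_apply]

lemma mapC_sub {a b : Type*} (M N : Matrix a b ℝ) :
    (M - N).map Complex.ofReal = M.map Complex.ofReal - N.map Complex.ofReal := by
  ext i j
  simp [Matrix.map_apply, Matrix.sub_apply]

lemma mapC_fromRows {a b c : Type*} (M : Matrix a c ℝ) (N : Matrix b c ℝ) :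
    (Matrix.fromRows M N).map Complex.ofReal
      = Matrix.fromRows (M.map Complex.ofReal) (N.map Complex.ofReal) := by
  ext i j
  cases i with
  | inl i => simp [Matrix.map_apply]
  | inr i => simp [Matrix.map_apply]

lemma tendsto_linmap_zero' {V Z : Type*} [NormedAddCommGroup V] [NormedSpace ℝ V]
    [NormedAddCommGroup Z] [NormedSpace ℝ Z] [FiniteDimensional ℝ V]
    (f : V →ₗ[ℝ] Z) (x : ℕ → V) (hx : Tendsto x atTop (nhds 0)) :
    Tendsto (fun t => f (x t)) atTop (nhds 0) := by
  have hc : Continuous f := LinearMap.continuous_of_finiteDimensional f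
  have := (hc.tendsto 0).comp hx
  simpa [Function.comp_def] using this

lemma matrix_eq_of_mulVec_eq {K : Type*} [CommRing K] {a b : Type*} [Fintype b] [DecidableEq b]
    (M N : Matrix a b K) (h : ∀ x : b → K, M *ᵥ x = N *ᵥ x) : M = N := by
  ext i j
  have := congrFun (h (Pi.single j 1)) i
  simpa [Matrix.mulVec_single] using this

lemma mapC_mul {a b c : Type*} [Fintype b] (M : Matrix a b ℝ) (N : Matrix b c ℝ) :
    (M * N).map Complex.ofReal = M.map Complex.ofReal * N.map Complex.ofReal := by
  ext i j
  simp [Matrix.mul_apply, Matrix.map_apply]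

lemma exists_eigenvector_of_mem_spectrum {k : ℕ} (M : Matrix (Fin k) (Fin k) ℂ) {μ : ℂ}
    (h : μ ∈ spectrum ℂ M) : ∃ v : Fin k → ℂ, v ≠ 0 ∧ M *ᵥ v = μ • v := by
  rw [← AlgEquiv.spectrum_eq (Matrix.toLinAlgEquiv' (R := ℂ) (n := Fin k)) M] at h
  have he : Module.End.HasEigenvalue (Matrix.toLinAlgEquiv' M) μ :=
    Module.End.hasEigenvalue_iff_mem_spectrum.mpr h
  obtain ⟨v, hv⟩ := he.exists_hasEigenvector
  refine ⟨v, hv.right, ?_⟩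
  have := hv.apply_eq_smul
  rwa [Matrix.toLinAlgEquiv'_apply] at this

/-- factor a linear map through another one containing its kernel -/
lemma exists_factor {K V Z : Type*} [Field K] [AddCommGroup V] [Module K V]
    [AddCommGroup Z] [Module K Z] (f : V →ₗ[K] Z) (g : V →ₗ[K] V)
    (h : LinearMap.ker f ≤ LinearMap.ker g) : ∃ h' : Z →ₗ[K] V, ∀ x, h' (f x) = g x := by
  set fbar := (LinearMap.ker f).liftQ f le_rfl with hfbar
  have hinj : LinearMap.ker fbar = ⊥ := Submodule.ker_liftQ_eq_bot _ _ _ le_rfl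
  obtain ⟨G, hG⟩ := fbar.exists_leftInverse_of_injective hinj
  set gbar := (LinearMap.ker f).liftQ g h with hgbar
  refine ⟨gbar ∘ₗ G, fun x => ?_⟩
  have h1 : fbar (Submodule.Quotient.mk x) = f x := Submodule.liftQ_apply _ f x
  have h2 : G (fbar (Submodule.Quotient.mk x)) = Submodule.Quotient.mk x := by
    have := congrArg (fun (φ : _ →ₗ[K] _) => φ (Submodule.Quotient.mk x)) hG
    simpa using this
  calc (gbar ∘ₗ G) (f x) = gbar (G (fbar (Submodule.Quotient.mk x))) := by rw [h1]; rfl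
  _ = gbar (Submodule.Quotient.mk x) := by rw [h2]
  _ = g x := Submodule.liftQ_apply _ g x


lemma spectralRadius_lt_one {k : ℕ} (M : Matrix (Fin k) (Fin k) ℂ)
    (h : ∀ μ ∈ spectrum ℂ M, ‖μ‖ < 1) : spectralRadius ℂ M < 1 := by
  rcases Set.eq_empty_or_nonempty (spectrum ℂ M) with he | hne
  · rw [spectralRadius, he]
    simp
  · obtain ⟨μ0, hμ0, hmax⟩ :=
      (spectrum.isCompact M).exists_isMaxOn hne continuous_nnnorm.continuousOn
    have : spectralRadius ℂ M ≤ (‖μ0‖₊ : ENNReal) := by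
      rw [spectralRadius]
      exact iSup₂_le fun μ hμ => ENNReal.coe_le_coe.mpr (hmax hμ)
    refine lt_of_le_of_lt this ?_
    have h1 : ‖μ0‖₊ < 1 := by
      have := h μ0 hμ0
      exact_mod_cast this
    rw [← ENNReal.coe_one]
    exact_mod_cast h1

lemma exists_pow_bound {k : ℕ} (M : Matrix (Fin k) (Fin k) ℂ)
    (h : ∀ μ ∈ spectrum ℂ M, ‖μ‖ < 1) :
    ∃ c ρ : ℝ, 0 ≤ c ∧ 0 ≤ ρ ∧ ρ < 1 ∧ ∀ j, ‖M ^ j‖ ≤ c * ρ ^ j := by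
  have hrad := spectralRadius_lt_one M h
  obtain ⟨s, hs1, hs2⟩ := exists_between hrad
  set ρ' : ENNReal := max s (1/2) with hρ'def
  have hρ'lt : ρ' < 1 := by
    apply max_lt hs2
    rw [ENNReal.div_lt_iff] <;> norm_num
  have hρ'rad : spectralRadius ℂ M < ρ' := lt_of_lt_of_le hs1 (le_max_left _ _)
  have hρ'ne : ρ' ≠ ⊤ := hρ'lt.ne_top
  have hρ'pos : 0 < ρ' := lt_of_lt_of_le (by norm_num) (le_max_right _ _)
  set ρ : ℝ := ρ'.toReal with hρdef
  have hρpos : 0 < ρ := ENNReal.toReal_pos hρ'pos.ne' hρ'ne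
  have hρlt : ρ < 1 := by
    rw [hρdef, ← ENNReal.toReal_one]
    exact ENNReal.toReal_strict_mono (by norm_num) hρ'lt
  -- Gelfand: eventually ‖M^j‖₊ ^ (1/j) < ρ'
  have hg := spectrum.pow_nnnorm_pow_one_div_tendsto_nhds_spectralRadius M
  have hev : ∀ᶠ j : ℕ in atTop, (‖M ^ j‖₊ : ENNReal) ^ (1 / (j : ℝ)) < ρ' :=
    hg.eventually_lt_const hρ'rad
  -- convert : for large j, ‖M ^ j‖ ≤ ρ ^ j
  have hev2 : ∀ᶠ j : ℕ in atTop, ‖M ^ j‖ ≤ ρ ^ j := by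
    filter_upwards [hev, eventually_ge_atTop 1] with j hj hj1
    have hjne : (j : ℝ) ≠ 0 := by positivity
    have h1 : ((‖M ^ j‖₊ : ENNReal) ^ (1 / (j : ℝ))) ^ (j : ℝ) ≤ ρ' ^ (j : ℝ) :=
      ENNReal.rpow_le_rpow hj.le (by positivity)
    rw [← ENNReal.rpow_mul, one_div, inv_mul_cancel₀ hjne, ENNReal.rpow_one,
      ENNReal.rpow_natCast] at h1
    have h3 := ENNReal.toReal_mono (ENNReal.pow_ne_top hρ'ne) h1
    rw [ENNReal.coe_toReal, coe_nnnorm, ENNReal.toReal_pow] at h3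
    exact h3
  obtain ⟨j0, hj0⟩ := hev2.exists_forall_of_atTop
  have hsum0 : (0:ℝ) ≤ ∑ i ∈ Finset.range j0, ‖M ^ i‖ / ρ ^ i :=
    Finset.sum_nonneg fun i _ => by positivity
  refine ⟨1 + ∑ i ∈ Finset.range j0, ‖M ^ i‖ / ρ ^ i, ρ, by linarith, hρpos.le, hρlt,
    fun j => ?_⟩
  by_cases hj : j0 ≤ j
  · have hpj : (0:ℝ) ≤ ρ ^ j := by positivity
    calc ‖M ^ j‖ ≤ ρ ^ j := hj0 j hj
    _ ≤ (1 + ∑ i ∈ Finset.range j0, ‖M ^ i‖ / ρ ^ i) * ρ ^ j := by nlinarith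
  · push_neg at hj
    have h1 : ‖M ^ j‖ / ρ ^ j ≤ ∑ i ∈ Finset.range j0, ‖M ^ i‖ / ρ ^ i :=
      Finset.single_le_sum (f := fun i => ‖M ^ i‖ / ρ ^ i)
        (fun i _ => by positivity) (Finset.mem_range.mpr hj)
    have hpow : (0:ℝ) < ρ ^ j := by positivity
    calc ‖M ^ j‖ = (‖M ^ j‖ / ρ ^ j) * ρ ^ j := by field_simp
    _ ≤ (1 + ∑ i ∈ Finset.range j0, ‖M ^ i‖ / ρ ^ i) * ρ ^ j := by nlinarith


lemma geom_tail_sum_le {ρ : ℝ} (hρ0 : 0 ≤ ρ) (hρ : ρ < 1) (s : ℕ) :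
    ∑ j ∈ Finset.range s, ρ ^ (s - 1 - j) ≤ 1 / (1 - ρ) := by
  rw [Finset.sum_range_reflect (fun i => ρ ^ i) s]
  have h1 : (0:ℝ) < 1 - ρ := by linarith
  rcases eq_or_ne ρ 1 with rfl | hne
  · linarith
  · rw [geom_sum_eq hne]
    have heq : (ρ ^ s - 1) / (ρ - 1) = (1 - ρ ^ s) / (1 - ρ) := by
      rw [← neg_div_neg_eq]; ring_nf
    rw [heq, div_le_div_iff₀ h1 h1]
    nlinarith [pow_nonneg hρ0 s]

lemma tendsto_zero_of_recurrence {k : ℕ} (M : Matrix (Fin k) (Fin k) ℂ) (c ρ : ℝ)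
    (hc : 0 ≤ c) (hρ0 : 0 ≤ ρ) (hρ : ρ < 1)
    (hb : ∀ j, ‖M ^ j‖ ≤ c * ρ ^ j)
    (ω μ : ℕ → Fin k → ℂ)
    (hrec : ∀ t, ω (t + 1) = M *ᵥ ω t + μ t)
    (hμ : Tendsto μ atTop (nhds 0)) :
    Tendsto ω atTop (nhds 0) := by
  have h1ρ : (0:ℝ) < 1 - ρ := by linarith
  have hmb : ∀ (j : ℕ) (x : Fin k → ℂ), ‖(M ^ j) *ᵥ x‖ ≤ c * ρ ^ j * ‖x‖ := by
    intro j x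
    refine (Matrix.linfty_opNorm_mulVec _ _).trans ?_
    exact mul_le_mul_of_nonneg_right (hb j) (norm_nonneg x)
  have hform : ∀ T s, ω (T + s) =
      (M ^ s) *ᵥ ω T + ∑ j ∈ Finset.range s, (M ^ (s - 1 - j)) *ᵥ μ (T + j) := by
    intro T s
    induction s with
    | zero => simp [Matrix.one_mulVec]
    | succ s ih =>
      have h2 : ω (T + (s + 1)) = M *ᵥ ω (T + s) + μ (T + s) := by
        rw [← add_assoc]; exact hrec (T + s)
      rw [h2, ih, Matrix.mulVec_add, Matrix.mulVec_mulVec, ← pow_succ']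
      rw [Finset.sum_range_succ (fun j => (M ^ (s + 1 - 1 - j)) *ᵥ μ (T + j))]
      have h3 : M *ᵥ (∑ j ∈ Finset.range s, (M ^ (s - 1 - j)) *ᵥ μ (T + j))
          = ∑ j ∈ Finset.range s, (M ^ (s + 1 - 1 - j)) *ᵥ μ (T + j) := by
        rw [show M *ᵥ (∑ j ∈ Finset.range s, (M ^ (s - 1 - j)) *ᵥ μ (T + j))
            = M.mulVecLin (∑ j ∈ Finset.range s, (M ^ (s - 1 - j)) *ᵥ μ (T + j)) from rfl]
        rw [map_sum]
        refine Finset.sum_congr rfl fun j hj => ?_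
        have hjs : j < s := Finset.mem_range.mp hj
        show M *ᵥ ((M ^ (s - 1 - j)) *ᵥ μ (T + j)) = _
        rw [Matrix.mulVec_mulVec, ← pow_succ']
        have hexp : s - 1 - j + 1 = s + 1 - 1 - j := by omega
        rw [hexp]
      rw [h3]
      have h4 : s + 1 - 1 - s = 0 := by omega
      rw [h4, pow_zero, Matrix.one_mulVec]
      abel
  rw [NormedAddCommGroup.tendsto_nhds_zero] at hμ ⊢
  intro ε hε
  set K : ℝ := c / (1 - ρ) + 1 with hK
  have hKpos : 0 < K := by positivity
  obtain ⟨T, hT⟩ := (hμ (ε / (2 * K)) (by positivity)).exists_forall_of_atTop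
  have hbound : ∀ s, ‖ω (T + s)‖ ≤ c * ρ ^ s * ‖ω T‖ + ε / 2 := by
    intro s
    rw [hform T s]
    refine (norm_add_le _ _).trans ?_
    have hA : ‖(M ^ s) *ᵥ ω T‖ ≤ c * ρ ^ s * ‖ω T‖ := hmb s _
    have hB : ‖∑ j ∈ Finset.range s, (M ^ (s - 1 - j)) *ᵥ μ (T + j)‖ ≤ ε / 2 := by
      refine (norm_sum_le _ _).trans ?_
      have h5 : ∀ j ∈ Finset.range s, ‖(M ^ (s - 1 - j)) *ᵥ μ (T + j)‖
          ≤ (c * (ε / (2 * K))) * ρ ^ (s - 1 - j) := by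
        intro j _
        refine (hmb _ _).trans ?_
        have h6 : ‖μ (T + j)‖ ≤ ε / (2 * K) := (hT (T + j) (by omega)).le
        have h7 : (0:ℝ) ≤ ρ ^ (s - 1 - j) := by positivity
        calc c * ρ ^ (s - 1 - j) * ‖μ (T + j)‖ ≤ c * ρ ^ (s - 1 - j) * (ε / (2 * K)) := by
              apply mul_le_mul_of_nonneg_left h6 (by positivity)
        _ = (c * (ε / (2 * K))) * ρ ^ (s - 1 - j) := by ring
      refine (Finset.sum_le_sum h5).trans ?_
      rw [← Finset.mul_sum]
      have h8 := geom_tail_sum_le hρ0 hρ s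
      have h9 : (0:ℝ) ≤ c * (ε / (2 * K)) := by positivity
      refine (mul_le_mul_of_nonneg_left h8 h9).trans ?_
      have hcK : c / (1 - ρ) ≤ K := by rw [hK]; linarith
      rw [show c * (ε / (2 * K)) * (1 / (1 - ρ)) = (c / (1 - ρ)) * (ε / (2 * K)) by ring]
      calc (c / (1 - ρ)) * (ε / (2 * K)) ≤ K * (ε / (2 * K)) :=
            mul_le_mul_of_nonneg_right hcK (by positivity)
      _ = ε / 2 := by field_simp
    linarith
  have htend : Tendsto (fun s : ℕ => c * ρ ^ s * ‖ω T‖) atTop (nhds 0) := by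
    have := ((tendsto_pow_atTop_nhds_zero_of_lt_one hρ0 hρ).const_mul c).mul_const ‖ω T‖
    simpa using this
  obtain ⟨s0, hs0⟩ := (htend.eventually_lt_const (show (0:ℝ) < ε / 2 by linarith)).exists_forall_of_atTop
  filter_upwards [eventually_ge_atTop (T + s0)] with t ht
  have h10 : t = T + (t - T) := by omega
  rw [h10]
  have := hbound (t - T)
  have := hs0 (t - T) (by omega)
  linarith


/-- The key convergence lemma: PBH detectability + vanishing output + vanishing input
implies the state tends to zero. -/
theorem key_D {n p : ℕ} (F : Matrix (Fin n) (Fin n) ℝ) (C : Matrix (Fin p) (Fin n) ℝ)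
    (hPBH : ∀ z : ℂ, 1 ≤ ‖z‖ → ∀ v : Fin n → ℂ,
      (F.map Complex.ofReal) *ᵥ v = z • v → (C.map Complex.ofReal) *ᵥ v = 0 → v = 0)
    (e v : ℕ → Fin n → ℝ)
    (hrec : ∀ t, e (t + 1) = F *ᵥ e t + v t)
    (hv : Tendsto v atTop (nhds 0))
    (hy : Tendsto (fun t => C *ᵥ e t) atTop (nhds 0)) :
    Tendsto e atTop (nhds 0) := by
  -- Step 1: all "higher outputs" tend to zero
  have hD1 : ∀ k, Tendsto (fun t => (C * F ^ k) *ᵥ e t) atTop (nhds 0) := by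
    intro k
    induction k with
    | zero => simpa using hy
    | succ k ih =>
      have hshift : Tendsto (fun t => (C * F ^ k) *ᵥ e (t + 1)) atTop (nhds 0) :=
        (tendsto_add_atTop_iff_nat 1).mpr ih
      have hvv : Tendsto (fun t => (C * F ^ k) *ᵥ v t) atTop (nhds 0) :=
        tendsto_linmap_zero' (C * F ^ k).mulVecLin v hv
      have heq : (fun t => (C * F ^ (k + 1)) *ᵥ e t)
          = fun t => (C * F ^ k) *ᵥ e (t + 1) - (C * F ^ k) *ᵥ v t := by
        funext t
        rw [hrec t, Matrix.mulVec_add]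
        have : (C * F ^ k) *ᵥ (F *ᵥ e t) = (C * F ^ (k + 1)) *ᵥ e t := by
          rw [Matrix.mulVec_mulVec, Matrix.mul_assoc, ← pow_succ]
        rw [this]
        abel
      rw [heq]
      simpa using hshift.sub hvv
  -- Step 2: stabilized chain of kernels
  set Nj : ℕ → Submodule ℝ (Fin n → ℝ) :=
    fun j => ⨅ k : Fin (j + 1), LinearMap.ker ((C * F ^ (k : ℕ)).mulVecLin) with hNj
  have hmem : ∀ j x, x ∈ Nj j ↔ ∀ k : ℕ, k ≤ j → (C * F ^ k) *ᵥ x = 0 := by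
    intro j x
    rw [hNj]
    simp only [Submodule.mem_iInf, LinearMap.mem_ker]
    constructor
    · intro h k hk
      exact h ⟨k, by omega⟩
    · intro h k
      exact h k.val (by omega)
  have hmono : ∀ j, Nj (j + 1) ≤ Nj j := by
    intro j x hx
    rw [hmem] at hx ⊢
    exact fun k hk => hx k (by omega)
  obtain ⟨j0, hj0⟩ : ∃ j0, Nj (j0 + 1) = Nj j0 := by
    set d : ℕ → ℕ := fun j => Module.finrank ℝ (Nj j) with hd
    obtain ⟨j0, hj0⟩ := Nat.sInf_mem (Set.range_nonempty d)
    refine ⟨j0, Submodule.eq_of_le_of_finrank_le (hmono j0) ?_⟩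
    show d j0 ≤ d (j0 + 1)
    rw [hj0]
    exact Nat.sInf_le ⟨j0 + 1, rfl⟩
  have hWC : ∀ x ∈ Nj j0, C *ᵥ x = 0 := by
    intro x hx
    have := (hmem j0 x).mp hx 0 (by omega)
    simpa using this
  have hWinv : ∀ x ∈ Nj j0, F *ᵥ x ∈ Nj j0 := by
    intro x hx
    rw [← hj0] at hx
    rw [hmem]
    intro k hk
    have h1 : (C * F ^ k) *ᵥ (F *ᵥ x) = (C * F ^ (k + 1)) *ᵥ x := by
      rw [Matrix.mulVec_mulVec, Matrix.mul_assoc, ← pow_succ]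
    rw [h1]
    exact (hmem (j0 + 1) x).mp hx (k + 1) (by omega)
  -- Step 3: the observation map
  set Φ : (Fin n → ℝ) →ₗ[ℝ] (Fin (j0 + 1) → Fin p → ℝ) :=
    LinearMap.pi (fun k : Fin (j0 + 1) => (C * F ^ (k : ℕ)).mulVecLin) with hΦ
  have hkerΦ : LinearMap.ker Φ = Nj j0 := by
    rw [hΦ, LinearMap.ker_pi, hNj]
  have hΦe : Tendsto (fun t => Φ (e t)) atTop (nhds 0) := by
    rw [tendsto_pi_nhds]
    intro k
    simpa [hΦ, LinearMap.pi_apply] using hD1 (k : ℕ)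
  -- Step 4: projection onto W := Nj j0 along a complement
  obtain ⟨U, hcompl⟩ := Submodule.exists_isCompl (Nj j0)
  set Pl : (Fin n → ℝ) →ₗ[ℝ] (Fin n → ℝ) :=
    (Nj j0).subtype ∘ₗ ((Nj j0).linearProjOfIsCompl U hcompl) with hPl
  have hPlmem : ∀ x, Pl x ∈ Nj j0 := fun x => ((Nj j0).linearProjOfIsCompl U hcompl x).2
  have hPlid : ∀ x, x ∈ Nj j0 → Pl x = x := by
    intro x hx
    have h1 := Submodule.linearProjOfIsCompl_apply_left hcompl ⟨x, hx⟩
    rw [hPl]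
    exact congrArg (Submodule.subtype (Nj j0)) h1
  -- Step 5: q t tends to zero
  set q : ℕ → Fin n → ℝ := fun t => e t - Pl (e t) with hq
  set gmap : (Fin n → ℝ) →ₗ[ℝ] Fin n → ℝ := LinearMap.id - Pl with hgmap
  have hqker : LinearMap.ker Φ ≤ LinearMap.ker gmap := by
    intro x hx
    rw [hkerΦ] at hx
    rw [LinearMap.mem_ker, hgmap, LinearMap.sub_apply, LinearMap.id_apply, hPlid x hx, sub_self]
  obtain ⟨h', hh'⟩ := exists_factor Φ gmap hqker
  have hq0 : Tendsto q atTop (nhds 0) := by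
    have heq : q = fun t => h' (Φ (e t)) := by
      funext t
      rw [hh' (e t)]
      show e t - Pl (e t) = gmap (e t)
      rw [hgmap]
      simp [LinearMap.sub_apply]
    rw [heq]
    exact tendsto_linmap_zero' h' _ hΦe
  -- Step 6: w t := Pl (e t) satisfies a stable recurrence
  set w : ℕ → Fin n → ℝ := fun t => Pl (e t) with hwdef
  set Pm : Matrix (Fin n) (Fin n) ℝ := LinearMap.toMatrix' Pl with hPmdef
  have hPm : ∀ x, Pm *ᵥ x = Pl x := by
    intro x
    rw [hPmdef, ← Matrix.toLin'_apply, Matrix.toLin'_toMatrix']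
  set Gm : Matrix (Fin n) (Fin n) ℝ := Pm * F * Pm with hGmdef
  have hGmv : ∀ x, Gm *ᵥ x = Pl (F *ᵥ Pl x) := by
    intro x
    rw [hGmdef, ← Matrix.mulVec_mulVec, ← Matrix.mulVec_mulVec, hPm, hPm]
  set u : ℕ → Fin n → ℝ := fun t => Pl (F *ᵥ q t) + Pl (v t) with hu
  have hwrec : ∀ t, w (t + 1) = Gm *ᵥ w t + u t := by
    intro t
    show Pl (e (t + 1)) = Gm *ᵥ w t + u t
    rw [hrec t, map_add, hGmv, hPlid (w t) (hPlmem (e t))]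
    have he : F *ᵥ e t = F *ᵥ w t + F *ᵥ q t := by
      have h3 : e t = w t + q t := by
        show e t = Pl (e t) + (e t - Pl (e t))
        abel
      rw [h3, Matrix.mulVec_add]
    rw [he, map_add]
    show Pl (F *ᵥ w t) + Pl (F *ᵥ q t) + Pl (v t)
        = Pl (F *ᵥ w t) + (Pl (F *ᵥ q t) + Pl (v t))
    abel
  have hu0 : Tendsto u atTop (nhds 0) := by
    have h1 : Tendsto (fun t => Pl (F *ᵥ q t)) atTop (nhds 0) :=
      tendsto_linmap_zero' (Pl ∘ₗ F.mulVecLin) q hq0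
    have h2 : Tendsto (fun t => Pl (v t)) atTop (nhds 0) := tendsto_linmap_zero' Pl v hv
    simpa [hu] using h1.add h2
  -- Step 7: matrix identities and spectrum of Gm
  have hPP : Pm * Pm = Pm := matrix_eq_of_mulVec_eq _ _ (fun x => by
    rw [← Matrix.mulVec_mulVec, hPm, hPm, hPlid (Pl x) (hPlmem x)])
  have hPFP : Pm * F * Pm = F * Pm := matrix_eq_of_mulVec_eq _ _ (fun x => by
    rw [← Matrix.mulVec_mulVec, ← Matrix.mulVec_mulVec (v := x) (M := F) (N := Pm), hPm,
      ← Matrix.mulVec_mulVec, hPm, hPlid (F *ᵥ Pl x) (hWinv _ (hPlmem x))])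
  have hCP : C * Pm = 0 := matrix_eq_of_mulVec_eq _ _ (fun x => by
    rw [← Matrix.mulVec_mulVec, hPm, hWC (Pl x) (hPlmem x), Matrix.zero_mulVec])
  set Pc := Pm.map Complex.ofReal with hPc
  set Fc := F.map Complex.ofReal with hFc
  set Cc := C.map Complex.ofReal with hCc
  set Gc := Gm.map Complex.ofReal with hGc
  have hGcEq : Gc = Pc * Fc * Pc := by
    rw [hGc, hGmdef, mapC_mul, mapC_mul]
  have hPPc : Pc * Pc = Pc := by rw [hPc, ← mapC_mul, hPP]
  have hPFPc : Pc * Fc * Pc = Fc * Pc := by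
    rw [hPc, hFc, ← mapC_mul, ← mapC_mul, hPFP, mapC_mul]
  have hCPc : Cc * Pc = 0 := by
    rw [hCc, hPc, ← mapC_mul, hCP]
    ext i j
    simp
  have hspec : ∀ μ ∈ spectrum ℂ Gc, ‖μ‖ < 1 := by
    intro μ hμ
    by_contra hge
    push_neg at hge
    have hμne : μ ≠ 0 := by
      intro h0
      rw [h0] at hge
      simp at hge
      linarith
    obtain ⟨x, hxne, hxe⟩ := exists_eigenvector_of_mem_spectrum Gc hμ
    rw [hGcEq] at hxe
    have hPx : Pc *ᵥ x = x := by
      have h1 : Pc *ᵥ ((Pc * Fc * Pc) *ᵥ x) = Pc *ᵥ (μ • x) := by rw [hxe]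
      rw [Matrix.mulVec_mulVec, ← Matrix.mul_assoc, ← Matrix.mul_assoc, hPPc,
        Matrix.mul_assoc, Matrix.mulVec_smul] at h1
      have h2 : (Pc * (Fc * Pc)) *ᵥ x = μ • x := by
        rw [← Matrix.mul_assoc]
        exact hxe
      rw [h2] at h1
      have h3 : μ • (Pc *ᵥ x) = μ • x := h1.symm
      have := smul_right_injective (Fin n → ℂ) hμne h3
      exact this
    have hFx : Fc *ᵥ x = μ • x := by
      rw [← hxe, hPFPc, ← Matrix.mulVec_mulVec, hPx]
    have hCx : Cc *ᵥ x = 0 := by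
      rw [← hPx, Matrix.mulVec_mulVec, hCPc, Matrix.zero_mulVec]
    exact hxne (hPBH μ hge x hFx hCx)
  -- Step 8: conclude w → 0 via the complexified recurrence
  obtain ⟨c, ρ, hc0, hρ0, hρ1, hbnd⟩ := exists_pow_bound Gc hspec
  set wc : ℕ → Fin n → ℂ := fun t i => ((w t i : ℝ) : ℂ) with hwc
  set uc : ℕ → Fin n → ℂ := fun t i => ((u t i : ℝ) : ℂ) with huc
  have hrecC : ∀ t, wc (t + 1) = Gc *ᵥ wc t + uc t := by
    intro t
    have h1 := mulVec_mapC Gm (w t)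
    funext i
    rw [hwc]
    show ((w (t + 1) i : ℝ) : ℂ) = (Gc *ᵥ wc t + uc t) i
    rw [hwrec t]
    have h2 : (Gc *ᵥ wc t) i = ((Gm *ᵥ w t) i : ℂ) := by
      rw [hGc, hwc]
      exact congrFun h1 i
    simp [h2, huc]
  have huc0 : Tendsto uc atTop (nhds 0) := by
    rw [tendsto_pi_nhds]
    intro i
    have := (tendsto_pi_nhds.mp hu0) i
    have h2 := (Complex.continuous_ofReal.tendsto 0).comp this
    simpa [huc, Function.comp_def] using h2
  have hwc0 : Tendsto wc atTop (nhds 0) :=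
    tendsto_zero_of_recurrence Gc c ρ hc0 hρ0 hρ1 hbnd wc uc hrecC huc0
  have hw0 : Tendsto w atTop (nhds 0) := by
    rw [tendsto_pi_nhds]
    intro i
    have h1 := (tendsto_pi_nhds.mp hwc0) i
    have h2 := (Complex.continuous_re.tendsto 0).comp h1
    simpa [hwc, Function.comp_def] using h2
  have : e = fun t => w t + q t := by
    funext t
    show e t = Pl (e t) + (e t - Pl (e t))
    abel
  rw [this]
  simpa using hw0.add hq0


end Aux

end S12Aux

/-- Under the Assumption, if `ker X_f ⊇ ker [U_p; Y_p; Y_f; X_p]`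
and `rank [z X_p - X_f; U_p; Y_p] = n + m + r` for all `z ∈ ℂ` with `|z| ≥ 1`,
then the triple `(A, E, C)` is strong* detectable. -/
theorem statement12 {n m p r N : ℕ}
    (A : Matrix (Fin n) (Fin n) ℝ) (B : Matrix (Fin n) (Fin m) ℝ)
    (E : Matrix (Fin n) (Fin r) ℝ) (C : Matrix (Fin p) (Fin n) ℝ)
    (hE : E.rank = r)
    (ud : ℕ → Fin m → ℝ) (dd : ℕ → Fin r → ℝ) (xd : ℕ → Fin n → ℝ) (yd : ℕ → Fin p → ℝ)
    (hdata : GeneratedBy A B E C N ud dd xd yd)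
    (hAssumption : (Matrix.fromRows (pastMat N ud)
      (Matrix.fromRows (pastMat N dd) (pastMat N xd))).rank = m + r + n)
    (hker : ∀ g : Fin N → ℝ, (pastMat N ud).mulVec g = 0 → (pastMat N yd).mulVec g = 0 →
      (futMat N yd).mulVec g = 0 → (pastMat N xd).mulVec g = 0 →
      (futMat N xd).mulVec g = 0)
    (hrank : ∀ z : ℂ, 1 ≤ ‖z‖ →
      (Matrix.fromRows
        (z • (pastMat N xd).map Complex.ofReal - (futMat N xd).map Complex.ofReal)
        (Matrix.fromRows ((pastMat N ud).map Complex.ofReal)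
          ((pastMat N yd).map Complex.ofReal))).rank = n + m + r) :
    StrongStarDetectable A E C := by
  classical
  intro x d hxrec hyto
  -- real data identities
  have hXfeq : futMat N xd = A * pastMat N xd + B * pastMat N ud + E * pastMat N dd := by
    ext i j
    have h := congrFun (hdata.1 j.val j.isLt) i
    simpa [pastMat, futMat, Matrix.of_apply, Matrix.mulVec, dotProduct,
      Matrix.mul_apply, Matrix.add_apply, Pi.add_apply] using h
  have hYpeq : pastMat N yd = C * pastMat N xd := by
    ext i j
    have h := congrFun (hdata.2 j.val (le_of_lt j.isLt)) i
    simpa [pastMat, Matrix.of_apply, Matrix.mulVec, dotProduct, Matrix.mul_apply] using h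
  have hYfeq : futMat N yd = C * futMat N xd := by
    ext i j
    have h := congrFun (hdata.2 (j.val + 1) (Nat.succ_le_of_lt j.isLt)) i
    simpa [pastMat, futMat, Matrix.of_apply, Matrix.mulVec, dotProduct,
      Matrix.mul_apply] using h
  -- Step A : surjectivity of stacked data matrix; injectivity of C*E
  have hSsurj : Function.Surjective (Matrix.fromRows (pastMat N ud)
      (Matrix.fromRows (pastMat N dd) (pastMat N xd))).mulVecLin := by
    apply S12Aux.surj_of_rank_eq_card
    rw [hAssumption]
    simp [Fintype.card_sum]
    omega
  have hEinj : ∀ wv : Fin r → ℝ, E *ᵥ wv = 0 → wv = 0 := by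
    intro wv h0
    have hinj := S12Aux.inj_of_rank_eq_card E (by simpa using hE)
    have h1 : E.mulVecLin wv = E.mulVecLin 0 := by
      rw [Matrix.mulVecLin_apply, Matrix.mulVecLin_apply, h0, Matrix.mulVec_zero]
    exact hinj h1
  have hCEinj : ∀ wv : Fin r → ℝ, (C * E) *ᵥ wv = 0 → wv = 0 := by
    intro wv hCE0
    obtain ⟨g, hg⟩ := hSsurj (Sum.elim 0 (Sum.elim wv 0))
    rw [Matrix.mulVecLin_apply, Matrix.fromRows_mulVec, Matrix.fromRows_mulVec] at hg
    have h1 : pastMat N ud *ᵥ g = 0 := funext fun i => congrFun hg (Sum.inl i)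
    have h2 : pastMat N dd *ᵥ g = wv := funext fun i => congrFun hg (Sum.inr (Sum.inl i))
    have h3 : pastMat N xd *ᵥ g = 0 := funext fun i => congrFun hg (Sum.inr (Sum.inr i))
    have h4 : pastMat N yd *ᵥ g = 0 := by
      rw [hYpeq, ← Matrix.mulVec_mulVec, h3, Matrix.mulVec_zero]
    have h5 : futMat N xd *ᵥ g = E *ᵥ wv := by
      rw [hXfeq, Matrix.add_mulVec, Matrix.add_mulVec, ← Matrix.mulVec_mulVec,
        ← Matrix.mulVec_mulVec, ← Matrix.mulVec_mulVec, h1, h2, h3]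
      simp
    have h6 : futMat N yd *ᵥ g = 0 := by
      rw [hYfeq, ← Matrix.mulVec_mulVec, h5, Matrix.mulVec_mulVec, hCE0]
    have h7 := hker g h1 h4 h6 h3
    rw [h5] at h7
    exact hEinj wv h7
  have hCEinj' : Function.Injective (C * E).mulVecLin := by
    intro a b hab
    have h1 : (C * E) *ᵥ (a - b) = 0 := by
      rw [Matrix.mulVec_sub]
      rw [show (C * E) *ᵥ a = (C * E) *ᵥ b from hab, sub_self]
    exact sub_eq_zero.mp (hCEinj _ h1)
  obtain ⟨Klin, hKlin⟩ := (C * E).mulVecLin.exists_leftInverse_of_injective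
    (LinearMap.ker_eq_bot.mpr hCEinj')
  set Km : Matrix (Fin r) (Fin p) ℝ := LinearMap.toMatrix' Klin with hKm
  have hKmv : ∀ y, Km *ᵥ y = Klin y := fun y => by
    rw [hKm, ← Matrix.toLin'_apply, Matrix.toLin'_toMatrix']
  have hKCE : Km * (C * E) = 1 := by
    apply S12Aux.matrix_eq_of_mulVec_eq
    intro xv
    rw [← Matrix.mulVec_mulVec, hKmv, Matrix.one_mulVec]
    have h := LinearMap.congr_fun hKlin xv
    simpa [Matrix.mulVecLin_apply] using h
  have hEKCE : E * Km * (C * E) = E := by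
    rw [Matrix.mul_assoc E Km (C * E), hKCE, Matrix.mul_one]
  -- Step B : complex surjectivity and PBH condition
  have hScsurj : Function.Surjective ((Matrix.fromRows (pastMat N ud)
      (Matrix.fromRows (pastMat N dd) (pastMat N xd))).map Complex.ofReal).mulVecLin := by
    intro τ
    obtain ⟨g1, hg1⟩ := hSsurj (fun i => (τ i).re)
    obtain ⟨g2, hg2⟩ := hSsurj (fun i => (τ i).im)
    have hg1' : Matrix.fromRows (pastMat N ud)
        (Matrix.fromRows (pastMat N dd) (pastMat N xd)) *ᵥ g1 = fun i => (τ i).re := hg1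
    have hg2' : Matrix.fromRows (pastMat N ud)
        (Matrix.fromRows (pastMat N dd) (pastMat N xd)) *ᵥ g2 = fun i => (τ i).im := hg2
    refine ⟨(fun j => ((g1 j : ℝ) : ℂ)) + Complex.I • (fun j => ((g2 j : ℝ) : ℂ)), ?_⟩
    rw [Matrix.mulVecLin_apply, Matrix.mulVec_add, Matrix.mulVec_smul,
      S12Aux.mulVec_mapC, S12Aux.mulVec_mapC, hg1', hg2']
    funext i
    simp only [Pi.add_apply, Pi.smul_apply, smul_eq_mul]
    rw [mul_comm, Complex.re_add_im]
  have hPBHsys : ∀ z : ℂ, 1 ≤ ‖z‖ → ∀ (vv : Fin n → ℂ) (wv : Fin r → ℂ),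
      z • vv = (A.map Complex.ofReal) *ᵥ vv + (E.map Complex.ofReal) *ᵥ wv →
      (C.map Complex.ofReal) *ᵥ vv = 0 → vv = 0 := by
    intro z hz vv wv hzv hCv
    set Ac := A.map Complex.ofReal with hAc
    set Bc := B.map Complex.ofReal with hBc
    set Ec := E.map Complex.ofReal with hEc
    set Cc := C.map Complex.ofReal with hCc
    set Upc := (pastMat N ud).map Complex.ofReal with hUpc
    set Dpc := (pastMat N dd).map Complex.ofReal with hDpc
    set Xpc := (pastMat N xd).map Complex.ofReal with hXpc
    set Xfc := (futMat N xd).map Complex.ofReal with hXfc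
    set Ypc := (pastMat N yd).map Complex.ofReal with hYpc
    set T1 : Matrix (Fin n) (Fin m ⊕ (Fin r ⊕ Fin n)) ℂ :=
      Matrix.fromCols (-Bc) (Matrix.fromCols (-Ec)
        (z • (1 : Matrix (Fin n) (Fin n) ℂ) - Ac)) with hT1
    set T2 : Matrix (Fin m) (Fin m ⊕ (Fin r ⊕ Fin n)) ℂ :=
      Matrix.fromCols (1 : Matrix (Fin m) (Fin m) ℂ) 0 with hT2
    set T3 : Matrix (Fin p) (Fin m ⊕ (Fin r ⊕ Fin n)) ℂ :=
      Matrix.fromCols 0 (Matrix.fromCols 0 Cc) with hT3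
    set Tm := Matrix.fromRows T1 (Matrix.fromRows T2 T3) with hTm
    set Sc := (Matrix.fromRows (pastMat N ud)
      (Matrix.fromRows (pastMat N dd) (pastMat N xd))).map Complex.ofReal with hSc
    have hScblocks : Sc = Matrix.fromRows Upc (Matrix.fromRows Dpc Xpc) := by
      rw [hSc, S12Aux.mapC_fromRows, S12Aux.mapC_fromRows]
    have hXfcEq : Xfc = Ac * Xpc + Bc * Upc + Ec * Dpc := by
      rw [hXfc, hXfeq, S12Aux.mapC_add, S12Aux.mapC_add, S12Aux.mapC_mul, S12Aux.mapC_mul,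
        S12Aux.mapC_mul]
    have hYpcEq : Ypc = Cc * Xpc := by
      rw [hYpc, hYpeq, S12Aux.mapC_mul]
    have hTmS : Tm * Sc = Matrix.fromRows (z • Xpc - Xfc) (Matrix.fromRows Upc Ypc) := by
      rw [hScblocks, hTm, Matrix.fromRows_mul, Matrix.fromRows_mul,
        Matrix.fromRows_ext_iff]
      refine ⟨?_, ?_⟩
      · rw [hT1, Matrix.fromCols_mul_fromRows, Matrix.fromCols_mul_fromRows,
          Matrix.neg_mul, Matrix.neg_mul, Matrix.sub_mul, Matrix.smul_mul, Matrix.one_mul,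
          hXfcEq]
        abel
      · rw [Matrix.fromRows_ext_iff]
        refine ⟨?_, ?_⟩
        · rw [hT2, Matrix.fromCols_mul_fromRows, Matrix.one_mul, Matrix.zero_mul, add_zero]
        · rw [hT3, Matrix.fromCols_mul_fromRows, Matrix.fromCols_mul_fromRows,
            Matrix.zero_mul, Matrix.zero_mul, zero_add, zero_add, hYpcEq]
    have hrankz := hrank z hz
    have hTminj : Function.Injective Tm.mulVecLin := by
      apply S12Aux.inj_of_rank_eq_card
      have h1 : (Tm * Sc).rank = Tm.rank := by
        rw [Matrix.rank, Matrix.rank, Matrix.mulVecLin_mul,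
          LinearMap.range_comp_of_range_eq_top]
        rw [LinearMap.range_eq_top]
        exact hScsurj
      rw [hTmS] at h1
      rw [hrankz] at h1
      rw [← h1]
      simp [Fintype.card_sum]
      omega
    have hXc : T1 *ᵥ (Sum.elim 0 (Sum.elim wv vv)) = 0 := by
      rw [hT1, Matrix.fromCols_mulVec_sumElim, Matrix.fromCols_mulVec_sumElim,
        Matrix.mulVec_zero, Matrix.sub_mulVec, Matrix.smul_mulVec, Matrix.one_mulVec,
        Matrix.neg_mulVec, hzv]
      abel
    have hYc : T2 *ᵥ (Sum.elim 0 (Sum.elim wv vv)) = 0 := by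
      rw [hT2, Matrix.fromCols_mulVec_sumElim]
      simp
    have hZc : T3 *ᵥ (Sum.elim 0 (Sum.elim wv vv)) = 0 := by
      rw [hT3, Matrix.fromCols_mulVec_sumElim, Matrix.fromCols_mulVec_sumElim]
      simp [hCv]
    have hTv : Tm.mulVecLin (Sum.elim 0 (Sum.elim wv vv)) = Tm.mulVecLin 0 := by
      rw [Matrix.mulVecLin_apply, Matrix.mulVecLin_apply, Matrix.mulVec_zero]
      rw [hTm, Matrix.fromRows_mulVec, Matrix.fromRows_mulVec, hXc, hYc, hZc]
      funext i
      cases i with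
      | inl i => simp
      | inr i => cases i with
        | inl i => simp
        | inr i => simp
    have h0 := hTminj hTv
    funext i
    exact congrFun h0 (Sum.inr (Sum.inr i))
  -- Step C : the observer matrix F and its PBH detectability
  set Q : Matrix (Fin r) (Fin n) ℝ := Km * (C * A) with hQ
  set F : Matrix (Fin n) (Fin n) ℝ := A - E * Q with hF
  have hPBHF : ∀ z : ℂ, 1 ≤ ‖z‖ → ∀ vv : Fin n → ℂ,
      (F.map Complex.ofReal) *ᵥ vv = z • vv → (C.map Complex.ofReal) *ᵥ vv = 0 → vv = 0 := by
    intro z hz vv hFv hCv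
    have hFc : F.map Complex.ofReal
        = A.map Complex.ofReal - (E.map Complex.ofReal) * (Q.map Complex.ofReal) := by
      rw [hF, S12Aux.mapC_sub, S12Aux.mapC_mul]
    apply hPBHsys z hz vv (-(Q.map Complex.ofReal *ᵥ vv)) _ hCv
    rw [Matrix.mulVec_neg, ← hFv, hFc, Matrix.sub_mulVec, ← Matrix.mulVec_mulVec]
    abel
  -- Step D : rewrite the trajectory using F and conclude
  have hCAE : ∀ t, (C * E) *ᵥ d t = C *ᵥ x (t + 1) - (C * A) *ᵥ x t := by
    intro t
    rw [hxrec t, Matrix.mulVec_add, ← Matrix.mulVec_mulVec, ← Matrix.mulVec_mulVec]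
    abel
  have hrecF : ∀ t, x (t + 1) = F *ᵥ x t + (E * Km) *ᵥ (C *ᵥ x (t + 1)) := by
    intro t
    have hEQ : (E * Km) *ᵥ ((C * A) *ᵥ x t) = (E * Q) *ᵥ x t := by
      rw [Matrix.mulVec_mulVec, hQ, Matrix.mul_assoc]
    have hEd : E *ᵥ d t = (E * Km) *ᵥ (C *ᵥ x (t + 1)) - (E * Q) *ᵥ x t := by
      calc E *ᵥ d t = (E * Km * (C * E)) *ᵥ d t := by rw [hEKCE]
      _ = (E * Km) *ᵥ ((C * E) *ᵥ d t) := by rw [Matrix.mulVec_mulVec]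
      _ = (E * Km) *ᵥ (C *ᵥ x (t + 1) - (C * A) *ᵥ x t) := by rw [hCAE t]
      _ = (E * Km) *ᵥ (C *ᵥ x (t + 1)) - (E * Km) *ᵥ ((C * A) *ᵥ x t) := by
            rw [Matrix.mulVec_sub]
      _ = (E * Km) *ᵥ (C *ᵥ x (t + 1)) - (E * Q) *ᵥ x t := by rw [hEQ]
    conv_lhs => rw [hxrec t, hEd]
    rw [hF, Matrix.sub_mulVec]
    abel
  have hvto : Tendsto (fun t => (E * Km) *ᵥ (C *ᵥ x (t + 1))) atTop (nhds 0) := by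
    have h1 : Tendsto (fun t => C *ᵥ x (t + 1)) atTop (nhds 0) :=
      (tendsto_add_atTop_iff_nat 1).mpr hyto
    exact S12Aux.tendsto_linmap_zero' (E * Km).mulVecLin _ h1
  exact S12Aux.key_D F C hPBHF x _ hrecF hvto hyto

end
end
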